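/- arXiv:2008.13494 — 3 statements merged into one kernel-verified Lean document; each statement's English description precedes it below -/
import Mathlib

section
/- Let X be a coalgebra and s : X ⊗ X → X ⊗ X a coalgebra morphism with components s₁ := (id ⊗ ε)∘s and s₂ := (ε ⊗ id)∘s, writing ˣy := s₁(x⊗y) and x^y := s₂(x⊗y). Assume s is left non-degenerate, i.e., the map G_s(x⊗y) := x^(y_(1)) ⊗ y_(2) is invertible, and define x·y := (id ⊗ ε)(G_s^{-1}(x⊗y)). Define x ⊥ y := ^{(y·x_(1))}x_(2). Then s(x·y_(1) ⊗ y_(2)) = (y ⊥ x_(2)) ⊗ x_(1) for all x,y. -/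
open TensorProduct

noncomputable section

variable (k : Type) [Field k] (X : Type) [AddCommGroup X] [Module k X] [Coalgebra k X]

/-- x ⊗ y ↦ ε(y) x -/
def cE : X ⊗[k] X →ₗ[k] X :=
  (TensorProduct.rid k X).toLinearMap ∘ₗ LinearMap.lTensor X (Coalgebra.counit (R := k))

/-- x ⊗ y ↦ ε(x) y -/
def cE' : X ⊗[k] X →ₗ[k] X :=
  (TensorProduct.lid k X).toLinearMap ∘ₗ LinearMap.rTensor X (Coalgebra.counit (R := k))

/-- first Sweedler component of a morphism `X⊗X → X⊗X` -/
def comp1 (s : X ⊗[k] X →ₗ[k] X ⊗[k] X) : X ⊗[k] X →ₗ[k] X := cE k X ∘ₗ s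

/-- second Sweedler component of a morphism `X⊗X → X⊗X` -/
def comp2 (s : X ⊗[k] X →ₗ[k] X ⊗[k] X) : X ⊗[k] X →ₗ[k] X := cE' k X ∘ₗ s

/-- `Gmap f (x ⊗ y) = f (x ⊗ y₍₁₎) ⊗ y₍₂₎` -/
def Gmap (f : X ⊗[k] X →ₗ[k] X) : X ⊗[k] X →ₗ[k] X ⊗[k] X :=
  TensorProduct.map f LinearMap.id ∘ₗ (TensorProduct.assoc k X X X).symm.toLinearMap ∘ₗ
    LinearMap.lTensor X (Coalgebra.comul (R := k))

/-- comultiplication of `X^cop` -/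
def comulCop : X →ₗ[k] X ⊗[k] X :=
  (TensorProduct.comm k X X).toLinearMap ∘ₗ Coalgebra.comul (R := k)

/-- `GmapCop f (x ⊗ y) = f (x ⊗ y₍₂₎) ⊗ y₍₁₎` -/
def GmapCop (f : X ⊗[k] X →ₗ[k] X) : X ⊗[k] X →ₗ[k] X ⊗[k] X :=
  TensorProduct.map f LinearMap.id ∘ₗ (TensorProduct.assoc k X X X).symm.toLinearMap ∘ₗ
    LinearMap.lTensor X (comulCop k X)

/-- comultiplication of `X ⊗ X` -/
def comulT : X ⊗[k] X →ₗ[k] (X ⊗[k] X) ⊗[k] (X ⊗[k] X) :=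
  (TensorProduct.tensorTensorTensorComm k X X X X).toLinearMap ∘ₗ
    TensorProduct.map (Coalgebra.comul (R := k)) (Coalgebra.comul (R := k))

/-- comultiplication of `X ⊗ X^cop` -/
def comulTCop : X ⊗[k] X →ₗ[k] (X ⊗[k] X) ⊗[k] (X ⊗[k] X) :=
  (TensorProduct.tensorTensorTensorComm k X X X X).toLinearMap ∘ₗ
    TensorProduct.map (Coalgebra.comul (R := k)) (comulCop k X)

/-- comultiplication of `X^cop ⊗ X^cop` -/
def comulTcc : X ⊗[k] X →ₗ[k] (X ⊗[k] X) ⊗[k] (X ⊗[k] X) :=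
  (TensorProduct.tensorTensorTensorComm k X X X X).toLinearMap ∘ₗ
    TensorProduct.map (comulCop k X) (comulCop k X)

/-- counit of `X ⊗ X` -/
def counitT : X ⊗[k] X →ₗ[k] k :=
  (TensorProduct.lid k k).toLinearMap ∘ₗ
    TensorProduct.map (Coalgebra.counit (R := k)) (Coalgebra.counit (R := k))

/-- `s : X⊗X → X⊗X` is a coalgebra morphism -/
def IsCoalgEndo (s : X ⊗[k] X →ₗ[k] X ⊗[k] X) : Prop :=
  comulT k X ∘ₗ s = TensorProduct.map s s ∘ₗ comulT k X ∧ counitT k X ∘ₗ s = counitT k X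

/-- `f : X⊗X → X` is a coalgebra morphism -/
def IsCoalgMor (f : X ⊗[k] X →ₗ[k] X) : Prop :=
  Coalgebra.comul (R := k) ∘ₗ f = TensorProduct.map f f ∘ₗ comulT k X ∧
  Coalgebra.counit (R := k) ∘ₗ f = counitT k X

/-- `f : X ⊗ X^cop → X` is a coalgebra morphism -/
def IsCoalgMorCop (f : X ⊗[k] X →ₗ[k] X) : Prop :=
  Coalgebra.comul (R := k) ∘ₗ f = TensorProduct.map f f ∘ₗ comulTCop k X ∧
  Coalgebra.counit (R := k) ∘ₗ f = counitT k X

/-- the operation `x ⊥ y := s₁ ((y·x₍₁₎) ⊗ x₍₂₎)` -/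
def dOf (s : X ⊗[k] X →ₗ[k] X ⊗[k] X) (p : X ⊗[k] X →ₗ[k] X) : X ⊗[k] X →ₗ[k] X :=
  comp1 k X s ∘ₗ Gmap k X p ∘ₗ (TensorProduct.comm k X X).toLinearMap

/-- the operation `⊥` of the endomorphism `s` viewed on `X^cop ⊗ X^cop` -/
def dOfCop (s : X ⊗[k] X →ₗ[k] X ⊗[k] X) (p : X ⊗[k] X →ₗ[k] X) : X ⊗[k] X →ₗ[k] X :=
  comp1 k X s ∘ₗ GmapCop k X p ∘ₗ (TensorProduct.comm k X X).toLinearMap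

/-- left non-degeneracy of `s` : `G_s` is invertible -/
def LeftNonDeg (s : X ⊗[k] X →ₗ[k] X ⊗[k] X) : Prop :=
  Function.Bijective (Gmap k X (comp2 k X s))

/-- `p` is the operation `·` associated with a left non-degenerate `s`, i.e.
`(x·y₍₁₎)^(y₍₂₎) = x^(y₍₁₎)·y₍₂₎ = ε(y)x`. -/
def IsDotOf (s : X ⊗[k] X →ₗ[k] X ⊗[k] X) (p : X ⊗[k] X →ₗ[k] X) : Prop :=
  comp2 k X s ∘ₗ Gmap k X p = cE k X ∧ p ∘ₗ Gmap k X (comp2 k X s) = cE k X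

def s12m (s : X ⊗[k] X →ₗ[k] X ⊗[k] X) : (X ⊗[k] X) ⊗[k] X →ₗ[k] (X ⊗[k] X) ⊗[k] X :=
  LinearMap.rTensor X s

def s23m (s : X ⊗[k] X →ₗ[k] X ⊗[k] X) : (X ⊗[k] X) ⊗[k] X →ₗ[k] (X ⊗[k] X) ⊗[k] X :=
  (TensorProduct.assoc k X X X).symm.toLinearMap ∘ₗ LinearMap.lTensor X s ∘ₗ
    (TensorProduct.assoc k X X X).toLinearMap

/-- the braid equation -/
def IsBraidSol (s : X ⊗[k] X →ₗ[k] X ⊗[k] X) : Prop :=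
  s12m k X s ∘ₗ s23m k X s ∘ₗ s12m k X s = s23m k X s ∘ₗ s12m k X s ∘ₗ s23m k X s

/-- the exchange identity `y₍₁₎⊥x₍₂₎ ⊗ x₍₁₎·y₍₂₎ = y₍₂₎⊥x₍₁₎ ⊗ x₍₂₎·y₍₁₎` -/
def ExchangeId (p d : X ⊗[k] X →ₗ[k] X) : Prop :=
  ∀ (x y : X) (n m : ℕ) (x1 x2 : Fin n → X) (y1 y2 : Fin m → X),
    (∑ i, x1 i ⊗ₜ[k] x2 i) = Coalgebra.comul (R := k) x →
    (∑ j, y1 j ⊗ₜ[k] y2 j) = Coalgebra.comul (R := k) y →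
    (∑ i, ∑ j, d (y1 j ⊗ₜ[k] x2 i) ⊗ₜ[k] p (x1 i ⊗ₜ[k] y2 j)) =
      ∑ i, ∑ j, d (y2 j ⊗ₜ[k] x1 i) ⊗ₜ[k] p (x2 i ⊗ₜ[k] y1 j)

/-- the three q-cycle coalgebra conditions -/
def QCycleConds (p d : X ⊗[k] X →ₗ[k] X) : Prop :=
  ∀ (x y z : X) (n m : ℕ) (y1 y2 : Fin n → X) (z1 z2 : Fin m → X),
    (∑ i, y1 i ⊗ₜ[k] y2 i) = Coalgebra.comul (R := k) y →
    (∑ j, z1 j ⊗ₜ[k] z2 j) = Coalgebra.comul (R := k) z →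
    ((∑ i, p (p (x ⊗ₜ[k] y1 i) ⊗ₜ[k] d (z ⊗ₜ[k] y2 i))) =
        ∑ j, p (p (x ⊗ₜ[k] z2 j) ⊗ₜ[k] p (y ⊗ₜ[k] z1 j)) ∧
     (∑ i, d (p (x ⊗ₜ[k] y1 i) ⊗ₜ[k] p (z ⊗ₜ[k] y2 i))) =
        ∑ j, p (d (x ⊗ₜ[k] z2 j) ⊗ₜ[k] d (y ⊗ₜ[k] z1 j)) ∧
     (∑ i, d (d (x ⊗ₜ[k] y1 i) ⊗ₜ[k] d (z ⊗ₜ[k] y2 i))) =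
        ∑ j, d (d (x ⊗ₜ[k] z2 j) ⊗ₜ[k] p (y ⊗ₜ[k] z1 j)))


/-- the left action `ˣy := y₍₂₎ ⊥ x^(y₍₁₎)`, where `g` is the operation `x^y` -/
def bOf (g d : X ⊗[k] X →ₗ[k] X) : X ⊗[k] X →ₗ[k] X :=
  d ∘ₗ (TensorProduct.comm k X X).toLinearMap ∘ₗ Gmap k X g

/-- the left action `_xy := y₍₁₎ · x_(y₍₂₎)`, where `g'` is the operation `x_y` -/
def uOfCop (g' p : X ⊗[k] X →ₗ[k] X) : X ⊗[k] X →ₗ[k] X :=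
  p ∘ₗ (TensorProduct.comm k X X).toLinearMap ∘ₗ GmapCop k X g'

/-- `Hmap f (x ⊗ y) = f (y₍₂₎ ⊗ x) ⊗ y₍₁₎` -/
def Hmap (f : X ⊗[k] X →ₗ[k] X) : X ⊗[k] X →ₗ[k] X ⊗[k] X :=
  TensorProduct.map f LinearMap.id ∘ₗ (TensorProduct.assoc k X X X).symm.toLinearMap ∘ₗ
    LinearMap.lTensor X (TensorProduct.comm k X X).toLinearMap ∘ₗ
    (TensorProduct.assoc k X X X).toLinearMap ∘ₗ
    LinearMap.rTensor X (comulCop k X) ∘ₗ (TensorProduct.comm k X X).toLinearMap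

/-- `HmapCop f (x ⊗ y) = f (y₍₁₎ ⊗ x) ⊗ y₍₂₎` -/
def HmapCop (f : X ⊗[k] X →ₗ[k] X) : X ⊗[k] X →ₗ[k] X ⊗[k] X :=
  TensorProduct.map f LinearMap.id ∘ₗ (TensorProduct.assoc k X X X).symm.toLinearMap ∘ₗ
    LinearMap.lTensor X (TensorProduct.comm k X X).toLinearMap ∘ₗ
    (TensorProduct.assoc k X X X).toLinearMap ∘ₗ
    LinearMap.rTensor X (Coalgebra.comul (R := k)) ∘ₗ (TensorProduct.comm k X X).toLinearMap


section Aux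

open Coalgebra

lemma cE_tmul (x y : X) : cE k X (x ⊗ₜ[k] y) = Coalgebra.counit (R := k) y • x := by
  simp [cE]

lemma cE'_tmul (x y : X) : cE' k X (x ⊗ₜ[k] y) = Coalgebra.counit (R := k) x • y := by
  simp [cE']

variable {k X}

lemma sum_smul_right {ι : Type*} (y : X) (S : Finset ι) (u v : ι → X)
    (h : ∑ t ∈ S, u t ⊗ₜ[k] v t = Coalgebra.comul (R := k) y) :
    ∑ t ∈ S, Coalgebra.counit (R := k) (u t) • v t = y := by
  have := congrArg (TensorProduct.lid k X ∘ LinearMap.rTensor X (Coalgebra.counit (R := k))) h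
  simpa [map_sum, Coalgebra.rTensor_counit_comul] using this

lemma sum_smul_left {ι : Type*} (y : X) (S : Finset ι) (u v : ι → X)
    (h : ∑ t ∈ S, u t ⊗ₜ[k] v t = Coalgebra.comul (R := k) y) :
    ∑ t ∈ S, Coalgebra.counit (R := k) (v t) • u t = y := by
  have := congrArg (TensorProduct.rid k X ∘ LinearMap.lTensor X (Coalgebra.counit (R := k))) h
  simpa [map_sum, Coalgebra.lTensor_counit_comul] using this

lemma counit_sum_mul {ι : Type*} (y : X) (S : Finset ι) (u v : ι → X)
    (h : ∑ t ∈ S, u t ⊗ₜ[k] v t = Coalgebra.comul (R := k) y) :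
    ∑ t ∈ S, Coalgebra.counit (R := k) (u t) * Coalgebra.counit (R := k) (v t)
      = Coalgebra.counit (R := k) y := by
  have := congrArg (Coalgebra.counit (R := k)) (sum_smul_right y S u v h)
  simpa [map_sum, smul_eq_mul] using this

lemma Gmap_tmul (f : X ⊗[k] X →ₗ[k] X) (x y : X) {ι : Type*} (S : Finset ι) (u v : ι → X)
    (h : ∑ t ∈ S, u t ⊗ₜ[k] v t = Coalgebra.comul (R := k) y) :
    Gmap k X f (x ⊗ₜ[k] y) = ∑ t ∈ S, f (x ⊗ₜ[k] u t) ⊗ₜ[k] v t := by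
  simp only [Gmap, LinearMap.comp_apply, LinearMap.lTensor_tmul, ← h, tmul_sum, map_sum,
    LinearEquiv.coe_coe, assoc_symm_tmul, map_tmul, LinearMap.id_coe, id_eq]

lemma GmapCop_tmul (f : X ⊗[k] X →ₗ[k] X) (x y : X) {ι : Type*} (S : Finset ι) (u v : ι → X)
    (h : ∑ t ∈ S, u t ⊗ₜ[k] v t = Coalgebra.comul (R := k) y) :
    GmapCop k X f (x ⊗ₜ[k] y) = ∑ t ∈ S, f (x ⊗ₜ[k] v t) ⊗ₜ[k] u t := by
  simp only [GmapCop, LinearMap.comp_apply, LinearMap.lTensor_tmul, comulCop,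
    LinearEquiv.coe_coe, ← h, map_sum, comm_tmul, tmul_sum, assoc_symm_tmul, map_tmul,
    LinearMap.id_coe, id_eq]

lemma comulT_tmul (x y : X) {ι ι' : Type*} (S : Finset ι) (u v : ι → X)
    (S' : Finset ι') (u' v' : ι' → X)
    (h : ∑ t ∈ S, u t ⊗ₜ[k] v t = Coalgebra.comul (R := k) x)
    (h' : ∑ t ∈ S', u' t ⊗ₜ[k] v' t = Coalgebra.comul (R := k) y) :
    comulT k X (x ⊗ₜ[k] y) =
      ∑ i ∈ S, ∑ j ∈ S', (u i ⊗ₜ[k] u' j) ⊗ₜ[k] (v i ⊗ₜ[k] v' j) := by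
  simp only [comulT, LinearMap.comp_apply, map_tmul, LinearEquiv.coe_coe, ← h, ← h',
    sum_tmul, tmul_sum, map_sum, tensorTensorTensorComm_tmul]
  rw [Finset.sum_comm]

lemma reassoc_sum {W : Type} [AddCommGroup W] [Module k W]
    (ψ : X ⊗[k] (X ⊗[k] X) →ₗ[k] W) {y : X} (r : Coalgebra.Repr k y (X × X))
    (rl : ∀ i : r.ι, Coalgebra.Repr k (r.left i) (X × X))
    (rr : ∀ i : r.ι, Coalgebra.Repr k (r.right i) (X × X)) :
    ∑ i ∈ r.index, ∑ j ∈ (rl i).index,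
        ψ ((rl i).left j ⊗ₜ[k] ((rl i).right j ⊗ₜ[k] r.right i)) =
      ∑ i ∈ r.index, ∑ j ∈ (rr i).index,
        ψ (r.left i ⊗ₜ[k] ((rr i).left j ⊗ₜ[k] (rr i).right j)) := by
  have h := Coalgebra.sum_tmul_tmul_eq r rl rr
  have := congrArg ψ h
  simpa only [map_sum] using this

/-- `(cE' ⊗ cE') ∘ comulT = comul ∘ cE'`. -/
lemma L2 : TensorProduct.map (cE' k X) (cE' k X) ∘ₗ comulT k X =
    Coalgebra.comul (R := k) ∘ₗ cE' k X := by
  apply TensorProduct.ext'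
  intro a b
  have ra := Coalgebra.Repr.arbitrary k a
  have rb := Coalgebra.Repr.arbitrary k b
  rw [LinearMap.comp_apply, LinearMap.comp_apply,
    comulT_tmul a b ra.index ra.left ra.right rb.index rb.left rb.right ra.eq rb.eq, cE'_tmul]
  simp only [map_sum, map_tmul, cE'_tmul, ← smul_tmul', tmul_smul, smul_smul, map_smul]
  calc ∑ i ∈ ra.index, ∑ j ∈ rb.index,
        (Coalgebra.counit (R := k) (ra.right i) * Coalgebra.counit (R := k) (ra.left i)) •
          (rb.left j ⊗ₜ[k] rb.right j)
      = ∑ i ∈ ra.index,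
          (Coalgebra.counit (R := k) (ra.left i) * Coalgebra.counit (R := k) (ra.right i)) •
            Coalgebra.comul (R := k) b := by
        refine Finset.sum_congr rfl fun i _ => ?_
        rw [← Finset.smul_sum, rb.eq, mul_comm]
    _ = Coalgebra.counit (R := k) a • Coalgebra.comul (R := k) b := by
        rw [← Finset.sum_smul, counit_sum_mul a ra.index ra.left ra.right ra.eq]

/-- `(cE ⊗ cE') ∘ comm ∘ comulT = id`. -/
lemma L1' : TensorProduct.map (cE k X) (cE' k X) ∘ₗ
    (TensorProduct.comm k (X ⊗[k] X) (X ⊗[k] X)).toLinearMap ∘ₗ comulT k X =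
    LinearMap.id := by
  apply TensorProduct.ext'
  intro a b
  have ra := Coalgebra.Repr.arbitrary k a
  have rb := Coalgebra.Repr.arbitrary k b
  rw [LinearMap.comp_apply, LinearMap.comp_apply,
    comulT_tmul a b ra.index ra.left ra.right rb.index rb.left rb.right ra.eq rb.eq]
  simp only [map_sum, LinearEquiv.coe_coe, comm_tmul, map_tmul, cE_tmul, cE'_tmul,
    ← smul_tmul', tmul_smul, smul_smul, LinearMap.id_apply]
  calc ∑ i ∈ ra.index, ∑ j ∈ rb.index,
        (Coalgebra.counit (R := k) (ra.left i) * Coalgebra.counit (R := k) (rb.right j)) •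
          (ra.right i ⊗ₜ[k] rb.left j)
      = ∑ i ∈ ra.index, Coalgebra.counit (R := k) (ra.left i) •
          (ra.right i ⊗ₜ[k] ∑ j ∈ rb.index, Coalgebra.counit (R := k) (rb.right j) • rb.left j) := by
        refine Finset.sum_congr rfl fun i _ => ?_
        rw [tmul_sum, Finset.smul_sum]
        refine Finset.sum_congr rfl fun j _ => ?_
        rw [tmul_smul, smul_smul]
    _ = (∑ i ∈ ra.index, Coalgebra.counit (R := k) (ra.left i) • ra.right i) ⊗ₜ[k] b := by
        rw [sum_smul_left b rb.index rb.left rb.right rb.eq, sum_tmul]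
        exact Finset.sum_congr rfl fun i _ => (smul_tmul' _ _ _).symm
    _ = a ⊗ₜ[k] b := by rw [sum_smul_right a ra.index ra.left ra.right ra.eq]

end Aux

section Main

open Coalgebra

variable {k X}

/-- Sweedler decomposition of the comultiplication of `s₂` (fact F2). -/
lemma comul_comp2 (s : X ⊗[k] X →ₗ[k] X ⊗[k] X) (hs : IsCoalgEndo k X s)
    (x y : X) {ι ι' : Type*} (S : Finset ι) (u v : ι → X) (S' : Finset ι') (u' v' : ι' → X)
    (h : ∑ t ∈ S, u t ⊗ₜ[k] v t = Coalgebra.comul (R := k) x)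
    (h' : ∑ t ∈ S', u' t ⊗ₜ[k] v' t = Coalgebra.comul (R := k) y) :
    Coalgebra.comul (R := k) (comp2 k X s (x ⊗ₜ[k] y)) =
      ∑ i ∈ S, ∑ j ∈ S', comp2 k X s (u i ⊗ₜ[k] u' j) ⊗ₜ[k] comp2 k X s (v i ⊗ₜ[k] v' j) := by
  have h0 := LinearMap.congr_fun hs.1 (x ⊗ₜ[k] y)
  have h2 := LinearMap.congr_fun (L2 (k := k) (X := X)) (s (x ⊗ₜ[k] y))
  simp only [LinearMap.comp_apply] at h0 h2
  calc Coalgebra.comul (R := k) (comp2 k X s (x ⊗ₜ[k] y))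
      = TensorProduct.map (cE' k X) (cE' k X) (comulT k X (s (x ⊗ₜ[k] y))) := by
        simp only [comp2, LinearMap.comp_apply]; exact h2.symm
    _ = TensorProduct.map (cE' k X) (cE' k X)
          (TensorProduct.map s s (comulT k X (x ⊗ₜ[k] y))) := by rw [h0]
    _ = ∑ i ∈ S, ∑ j ∈ S',
          comp2 k X s (u i ⊗ₜ[k] u' j) ⊗ₜ[k] comp2 k X s (v i ⊗ₜ[k] v' j) := by
        rw [comulT_tmul x y S u v S' u' v' h h']
        simp only [map_sum, map_tmul, comp2, LinearMap.comp_apply]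

/-- swapped Sweedler decomposition of `s` (fact F0'). -/
lemma s_eq_swap (s : X ⊗[k] X →ₗ[k] X ⊗[k] X) (hs : IsCoalgEndo k X s)
    (x y : X) {ι ι' : Type*} (S : Finset ι) (u v : ι → X) (S' : Finset ι') (u' v' : ι' → X)
    (h : ∑ t ∈ S, u t ⊗ₜ[k] v t = Coalgebra.comul (R := k) x)
    (h' : ∑ t ∈ S', u' t ⊗ₜ[k] v' t = Coalgebra.comul (R := k) y) :
    s (x ⊗ₜ[k] y) =
      ∑ i ∈ S, ∑ j ∈ S', comp1 k X s (v i ⊗ₜ[k] v' j) ⊗ₜ[k] comp2 k X s (u i ⊗ₜ[k] u' j) := by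
  have h0 := LinearMap.congr_fun hs.1 (x ⊗ₜ[k] y)
  have h1 := LinearMap.congr_fun (L1' (k := k) (X := X)) (s (x ⊗ₜ[k] y))
  simp only [LinearMap.comp_apply, LinearEquiv.coe_coe, LinearMap.id_apply] at h0 h1
  calc s (x ⊗ₜ[k] y)
      = TensorProduct.map (cE k X) (cE' k X)
          ((TensorProduct.comm k (X ⊗[k] X) (X ⊗[k] X)) (comulT k X (s (x ⊗ₜ[k] y)))) := h1.symm
    _ = TensorProduct.map (cE k X) (cE' k X)
          ((TensorProduct.comm k (X ⊗[k] X) (X ⊗[k] X))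
            (TensorProduct.map s s (comulT k X (x ⊗ₜ[k] y)))) := by rw [h0]
    _ = ∑ i ∈ S, ∑ j ∈ S',
          comp1 k X s (v i ⊗ₜ[k] v' j) ⊗ₜ[k] comp2 k X s (u i ⊗ₜ[k] u' j) := by
        rw [comulT_tmul x y S u v S' u' v' h h']
        simp only [map_sum, map_tmul, comm_tmul, comp1, comp2, LinearMap.comp_apply]

lemma dOf_tmul (s : X ⊗[k] X →ₗ[k] X ⊗[k] X) (p : X ⊗[k] X →ₗ[k] X) (a b : X)
    {ι : Type*} (S : Finset ι) (u v : ι → X)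
    (h : ∑ t ∈ S, u t ⊗ₜ[k] v t = Coalgebra.comul (R := k) a) :
    dOf k X s p (a ⊗ₜ[k] b) = ∑ t ∈ S, comp1 k X s (p (b ⊗ₜ[k] u t) ⊗ₜ[k] v t) := by
  simp only [dOf, LinearMap.comp_apply, LinearEquiv.coe_coe, comm_tmul,
    Gmap_tmul p b a S u v h, map_sum]

lemma stepA (s : X ⊗[k] X →ₗ[k] X ⊗[k] X) (p : X ⊗[k] X →ₗ[k] X) (hp : IsDotOf k X s p) :
    Gmap k X (comp2 k X s) ∘ₗ Gmap k X p = LinearMap.id := by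
  apply TensorProduct.ext'
  intro x y
  have r := Coalgebra.Repr.arbitrary k y
  let rl : ∀ i : r.ι, Coalgebra.Repr k (r.left i) (X × X) := fun i => Coalgebra.Repr.arbitrary k (r.left i)
  let rr : ∀ i : r.ι, Coalgebra.Repr k (r.right i) (X × X) :=
    fun i => Coalgebra.Repr.arbitrary k (r.right i)
  set ψ : X ⊗[k] (X ⊗[k] X) →ₗ[k] X ⊗[k] X :=
    LinearMap.rTensor X
        (comp2 k X s ∘ₗ LinearMap.rTensor X (p ∘ₗ TensorProduct.mk k X X x)) ∘ₗ
      (TensorProduct.assoc k X X X).symm.toLinearMap with hψdef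
  have hψ : ∀ u v w : X,
      ψ (u ⊗ₜ[k] (v ⊗ₜ[k] w)) = comp2 k X s (p (x ⊗ₜ[k] u) ⊗ₜ[k] v) ⊗ₜ[k] w := by
    intro u v w
    simp [hψdef]
  rw [LinearMap.comp_apply, LinearMap.id_apply,
    Gmap_tmul p x y r.index r.left r.right r.eq, map_sum]
  calc ∑ i ∈ r.index, Gmap k X (comp2 k X s) (p (x ⊗ₜ[k] r.left i) ⊗ₜ[k] r.right i)
      = ∑ i ∈ r.index, ∑ j ∈ (rr i).index,
          ψ (r.left i ⊗ₜ[k] ((rr i).left j ⊗ₜ[k] (rr i).right j)) := by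
        refine Finset.sum_congr rfl fun i _ => ?_
        rw [Gmap_tmul (comp2 k X s) _ _ (rr i).index (rr i).left (rr i).right (rr i).eq]
        exact Finset.sum_congr rfl fun j _ => (hψ _ _ _).symm
    _ = ∑ i ∈ r.index, ∑ j ∈ (rl i).index,
          ψ ((rl i).left j ⊗ₜ[k] ((rl i).right j ⊗ₜ[k] r.right i)) :=
        (reassoc_sum ψ r rl rr).symm
    _ = ∑ i ∈ r.index, cE k X (x ⊗ₜ[k] r.left i) ⊗ₜ[k] r.right i := by
        refine Finset.sum_congr rfl fun i _ => ?_
        have hinner : ∑ j ∈ (rl i).index,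
            comp2 k X s (p (x ⊗ₜ[k] (rl i).left j) ⊗ₜ[k] (rl i).right j)
              = cE k X (x ⊗ₜ[k] r.left i) := by
          rw [← LinearMap.congr_fun hp.1 (x ⊗ₜ[k] r.left i), LinearMap.comp_apply,
            Gmap_tmul p x (r.left i) (rl i).index (rl i).left (rl i).right (rl i).eq, map_sum]
        calc ∑ j ∈ (rl i).index, ψ ((rl i).left j ⊗ₜ[k] ((rl i).right j ⊗ₜ[k] r.right i))
            = (∑ j ∈ (rl i).index,
                comp2 k X s (p (x ⊗ₜ[k] (rl i).left j) ⊗ₜ[k] (rl i).right j)) ⊗ₜ[k]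
                  r.right i := by
              rw [sum_tmul]
              exact Finset.sum_congr rfl fun j _ => hψ _ _ _
          _ = cE k X (x ⊗ₜ[k] r.left i) ⊗ₜ[k] r.right i := by rw [hinner]
    _ = x ⊗ₜ[k] y := by
        simp only [cE_tmul]
        calc ∑ i ∈ r.index, (Coalgebra.counit (R := k) (r.left i) • x) ⊗ₜ[k] r.right i
            = x ⊗ₜ[k] ∑ i ∈ r.index, Coalgebra.counit (R := k) (r.left i) • r.right i := by
              rw [tmul_sum]
              exact Finset.sum_congr rfl fun i _ => smul_tmul _ _ _
          _ = x ⊗ₜ[k] y := by rw [sum_smul_right y r.index r.left r.right r.eq]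

lemma keyE (s : X ⊗[k] X →ₗ[k] X ⊗[k] X) (hs : IsCoalgEndo k X s)
    (p : X ⊗[k] X →ₗ[k] X) (hp : IsDotOf k X s p) :
    GmapCop k X (dOf k X s p) ∘ₗ (TensorProduct.comm k X X).toLinearMap ∘ₗ
      Gmap k X (comp2 k X s) = s := by
  apply TensorProduct.ext'
  intro x y
  have rx := Coalgebra.Repr.arbitrary k x
  have ry := Coalgebra.Repr.arbitrary k y
  let rc : ∀ i : ry.ι, Coalgebra.Repr k (ry.left i) (X × X) :=
    fun i => Coalgebra.Repr.arbitrary k (ry.left i)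
  let rr : ∀ i : ry.ι, Coalgebra.Repr k (ry.right i) (X × X) :=
    fun i => Coalgebra.Repr.arbitrary k (ry.right i)
  let ral : ∀ (i : ry.ι) (m : (rr i).ι), Coalgebra.Repr k ((rr i).left m) (X × X) :=
    fun i m => Coalgebra.Repr.arbitrary k ((rr i).left m)
  let rar : ∀ (i : ry.ι) (m : (rr i).ι), Coalgebra.Repr k ((rr i).right m) (X × X) :=
    fun i m => Coalgebra.Repr.arbitrary k ((rr i).right m)
  set ψ : rx.ι → (X ⊗[k] (X ⊗[k] X) →ₗ[k] X ⊗[k] X) := fun j =>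
    (TensorProduct.comm k X X).toLinearMap ∘ₗ
      TensorProduct.map (comp2 k X s ∘ₗ TensorProduct.mk k X X (rx.left j))
        (dOf k X s p ∘ₗ (TensorProduct.comm k X X).toLinearMap ∘ₗ
          LinearMap.rTensor X (comp2 k X s ∘ₗ TensorProduct.mk k X X (rx.right j)))
    with hψdef
  have hψ : ∀ (j : rx.ι) (u v w : X), ψ j (u ⊗ₜ[k] (v ⊗ₜ[k] w)) =
      dOf k X s p (w ⊗ₜ[k] comp2 k X s (rx.right j ⊗ₜ[k] v)) ⊗ₜ[k]
        comp2 k X s (rx.left j ⊗ₜ[k] u) := by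
    intro j u v w
    rw [hψdef]
    simp
  set ψ' : rx.ι → ry.ι → (X ⊗[k] (X ⊗[k] X) →ₗ[k] X ⊗[k] X) := fun j i =>
    ((TensorProduct.mk k X X).flip (comp2 k X s (rx.left j ⊗ₜ[k] ry.left i))) ∘ₗ
      comp1 k X s ∘ₗ
      LinearMap.rTensor X (p ∘ₗ
        LinearMap.rTensor X (comp2 k X s ∘ₗ TensorProduct.mk k X X (rx.right j))) ∘ₗ
      (TensorProduct.assoc k X X X).symm.toLinearMap
    with hψ'def
  have hψ' : ∀ (j : rx.ι) (i : ry.ι) (u v w : X), ψ' j i (u ⊗ₜ[k] (v ⊗ₜ[k] w)) =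
      comp1 k X s (p (comp2 k X s (rx.right j ⊗ₜ[k] u) ⊗ₜ[k] v) ⊗ₜ[k] w) ⊗ₜ[k]
        comp2 k X s (rx.left j ⊗ₜ[k] ry.left i) := by
    intro j i u v w
    rw [hψ'def]
    simp
  simp only [LinearMap.comp_apply, LinearEquiv.coe_coe]
  rw [Gmap_tmul (comp2 k X s) x y ry.index ry.left ry.right ry.eq, map_sum, map_sum]
  simp only [comm_tmul]
  calc ∑ i ∈ ry.index,
        GmapCop k X (dOf k X s p) (ry.right i ⊗ₜ[k] comp2 k X s (x ⊗ₜ[k] ry.left i))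
      = ∑ i ∈ ry.index, ∑ j ∈ rx.index, ∑ m ∈ (rc i).index,
          dOf k X s p (ry.right i ⊗ₜ[k]
            comp2 k X s (rx.right j ⊗ₜ[k] (rc i).right m)) ⊗ₜ[k]
              comp2 k X s (rx.left j ⊗ₜ[k] (rc i).left m) := by
        refine Finset.sum_congr rfl fun i _ => ?_
        rw [GmapCop_tmul (dOf k X s p) (ry.right i) (comp2 k X s (x ⊗ₜ[k] ry.left i))
          (rx.index ×ˢ (rc i).index)
          (fun q => comp2 k X s (rx.left q.1 ⊗ₜ[k] (rc i).left q.2))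
          (fun q => comp2 k X s (rx.right q.1 ⊗ₜ[k] (rc i).right q.2))
          (by
            rw [Finset.sum_product]
            exact (comul_comp2 s hs x (ry.left i) rx.index rx.left rx.right
              (rc i).index (rc i).left (rc i).right rx.eq (rc i).eq).symm)]
        rw [Finset.sum_product]
    _ = ∑ j ∈ rx.index, ∑ i ∈ ry.index, ∑ m ∈ (rc i).index,
          dOf k X s p (ry.right i ⊗ₜ[k]
            comp2 k X s (rx.right j ⊗ₜ[k] (rc i).right m)) ⊗ₜ[k]
              comp2 k X s (rx.left j ⊗ₜ[k] (rc i).left m) := Finset.sum_comm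
    _ = ∑ j ∈ rx.index, ∑ i ∈ ry.index, ∑ m ∈ (rr i).index,
          dOf k X s p ((rr i).right m ⊗ₜ[k]
            comp2 k X s (rx.right j ⊗ₜ[k] (rr i).left m)) ⊗ₜ[k]
              comp2 k X s (rx.left j ⊗ₜ[k] ry.left i) := by
        refine Finset.sum_congr rfl fun j _ => ?_
        have h1 : ∑ i ∈ ry.index, ∑ m ∈ (rc i).index,
            dOf k X s p (ry.right i ⊗ₜ[k]
              comp2 k X s (rx.right j ⊗ₜ[k] (rc i).right m)) ⊗ₜ[k]
                comp2 k X s (rx.left j ⊗ₜ[k] (rc i).left m)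
            = ∑ i ∈ ry.index, ∑ m ∈ (rc i).index,
                ψ j ((rc i).left m ⊗ₜ[k] ((rc i).right m ⊗ₜ[k] ry.right i)) := by
          refine Finset.sum_congr rfl fun i _ => Finset.sum_congr rfl fun m _ => ?_
          rw [hψ]
        have h2 : ∑ i ∈ ry.index, ∑ m ∈ (rr i).index,
            ψ j (ry.left i ⊗ₜ[k] ((rr i).left m ⊗ₜ[k] (rr i).right m))
            = ∑ i ∈ ry.index, ∑ m ∈ (rr i).index,
                dOf k X s p ((rr i).right m ⊗ₜ[k]
                  comp2 k X s (rx.right j ⊗ₜ[k] (rr i).left m)) ⊗ₜ[k]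
                    comp2 k X s (rx.left j ⊗ₜ[k] ry.left i) := by
          refine Finset.sum_congr rfl fun i _ => Finset.sum_congr rfl fun m _ => ?_
          rw [hψ]
        rw [h1, reassoc_sum (ψ j) ry rc rr, h2]
    _ = ∑ j ∈ rx.index, ∑ i ∈ ry.index, ∑ m ∈ (rr i).index, ∑ t ∈ (rar i m).index,
          ψ' j i ((rr i).left m ⊗ₜ[k] ((rar i m).left t ⊗ₜ[k] (rar i m).right t)) := by
        refine Finset.sum_congr rfl fun j _ => Finset.sum_congr rfl fun i _ =>
          Finset.sum_congr rfl fun m _ => ?_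
        rw [dOf_tmul s p ((rr i).right m) (comp2 k X s (rx.right j ⊗ₜ[k] (rr i).left m))
          (rar i m).index (rar i m).left (rar i m).right (rar i m).eq, sum_tmul]
        refine Finset.sum_congr rfl fun t _ => ?_
        rw [hψ']
    _ = ∑ j ∈ rx.index, ∑ i ∈ ry.index, ∑ m ∈ (rr i).index, ∑ t ∈ (ral i m).index,
          ψ' j i ((ral i m).left t ⊗ₜ[k] ((ral i m).right t ⊗ₜ[k] (rr i).right m)) := by
        refine Finset.sum_congr rfl fun j _ => Finset.sum_congr rfl fun i _ => ?_
        exact (reassoc_sum (ψ' j i) (rr i) (ral i) (rar i)).symm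
    _ = ∑ j ∈ rx.index, ∑ i ∈ ry.index, ∑ m ∈ (rr i).index,
          Coalgebra.counit (R := k) ((rr i).left m) •
            (comp1 k X s (rx.right j ⊗ₜ[k] (rr i).right m) ⊗ₜ[k]
              comp2 k X s (rx.left j ⊗ₜ[k] ry.left i)) := by
        refine Finset.sum_congr rfl fun j _ => Finset.sum_congr rfl fun i _ =>
          Finset.sum_congr rfl fun m _ => ?_
        have hinner : ∑ t ∈ (ral i m).index,
            p (comp2 k X s (rx.right j ⊗ₜ[k] (ral i m).left t) ⊗ₜ[k] (ral i m).right t)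
              = Coalgebra.counit (R := k) ((rr i).left m) • rx.right j := by
          rw [← cE_tmul k X (rx.right j) ((rr i).left m),
            ← LinearMap.congr_fun hp.2 (rx.right j ⊗ₜ[k] (rr i).left m), LinearMap.comp_apply,
            Gmap_tmul (comp2 k X s) (rx.right j) ((rr i).left m)
              (ral i m).index (ral i m).left (ral i m).right (ral i m).eq, map_sum]
        calc ∑ t ∈ (ral i m).index,
              ψ' j i ((ral i m).left t ⊗ₜ[k] ((ral i m).right t ⊗ₜ[k] (rr i).right m))
            = (comp1 k X s ((∑ t ∈ (ral i m).index,
                p (comp2 k X s (rx.right j ⊗ₜ[k] (ral i m).left t) ⊗ₜ[k]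
                  (ral i m).right t)) ⊗ₜ[k] (rr i).right m)) ⊗ₜ[k]
                    comp2 k X s (rx.left j ⊗ₜ[k] ry.left i) := by
              rw [sum_tmul, map_sum, sum_tmul]
              exact Finset.sum_congr rfl fun t _ => hψ' j i _ _ _
          _ = Coalgebra.counit (R := k) ((rr i).left m) •
                (comp1 k X s (rx.right j ⊗ₜ[k] (rr i).right m) ⊗ₜ[k]
                  comp2 k X s (rx.left j ⊗ₜ[k] ry.left i)) := by
              simp only [hinner, ← smul_tmul', map_smul]
    _ = ∑ j ∈ rx.index, ∑ i ∈ ry.index,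
          comp1 k X s (rx.right j ⊗ₜ[k] ry.right i) ⊗ₜ[k]
            comp2 k X s (rx.left j ⊗ₜ[k] ry.left i) := by
        refine Finset.sum_congr rfl fun j _ => Finset.sum_congr rfl fun i _ => ?_
        calc ∑ m ∈ (rr i).index, Coalgebra.counit (R := k) ((rr i).left m) •
              (comp1 k X s (rx.right j ⊗ₜ[k] (rr i).right m) ⊗ₜ[k]
                comp2 k X s (rx.left j ⊗ₜ[k] ry.left i))
            = (comp1 k X s (rx.right j ⊗ₜ[k]
                ∑ m ∈ (rr i).index, Coalgebra.counit (R := k) ((rr i).left m) • (rr i).right m))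
                  ⊗ₜ[k] comp2 k X s (rx.left j ⊗ₜ[k] ry.left i) := by
              rw [tmul_sum, map_sum, sum_tmul]
              refine Finset.sum_congr rfl fun m _ => ?_
              rw [tmul_smul, map_smul, smul_tmul']
          _ = comp1 k X s (rx.right j ⊗ₜ[k] ry.right i) ⊗ₜ[k]
                comp2 k X s (rx.left j ⊗ₜ[k] ry.left i) := by
              rw [sum_smul_right (ry.right i) (rr i).index (rr i).left (rr i).right (rr i).eq]
    _ = s (x ⊗ₜ[k] y) :=
        (s_eq_swap s hs x y rx.index rx.left rx.right ry.index ry.left ry.right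
          rx.eq ry.eq).symm

end Main

/-- `s (x·y₍₁₎ ⊗ y₍₂₎) = (y ⊥ x₍₂₎) ⊗ x₍₁₎`. -/
theorem stmt_1 (s : X ⊗[k] X →ₗ[k] X ⊗[k] X) (hs : IsCoalgEndo k X s)
    (hnd : LeftNonDeg k X s) (p : X ⊗[k] X →ₗ[k] X) (hp : IsDotOf k X s p) :
    s ∘ₗ Gmap k X p =
      GmapCop k X (dOf k X s p) ∘ₗ (TensorProduct.comm k X X).toLinearMap := by
  have hA := stepA s p hp
  have hE := keyE s hs p hp
  calc s ∘ₗ Gmap k X p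
      = (GmapCop k X (dOf k X s p) ∘ₗ (TensorProduct.comm k X X).toLinearMap ∘ₗ
          Gmap k X (comp2 k X s)) ∘ₗ Gmap k X p := by rw [hE]
    _ = GmapCop k X (dOf k X s p) ∘ₗ (TensorProduct.comm k X X).toLinearMap ∘ₗ
          (Gmap k X (comp2 k X s) ∘ₗ Gmap k X p) := by
        simp only [LinearMap.comp_assoc]
    _ = GmapCop k X (dOf k X s p) ∘ₗ (TensorProduct.comm k X X).toLinearMap := by
        rw [hA, LinearMap.comp_id]

end
end

section
/- Let X be a coalgebra and s a left non-degenerate coalgebra endomorphism of X⊗X. Then the triple (X; ·, ⊥), with x·y := (id⊗ε)(G_s^{-1}(x⊗y)) and x⊥y := ^{(y·x_(1))}x_(2), is a left regular q-magma coalgebra; in particular the exchange identity y_(1)⊥x_(2) ⊗ x_(1)·y_(2) = y_(2)⊥x_(1) ⊗ x_(2)·y_(1) holds for all x,y ∈ X. -/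
open TensorProduct

noncomputable section

variable (k : Type) [Field k] (X : Type) [AddCommGroup X] [Module k X] [Coalgebra k X]

/-!
Write `f := comp1 k X s`, `g := comp2 k X s` for the two components of `s`, and
`G_h (m ⊗ y) := h (m ⊗ y₍₁₎) ⊗ y₍₂₎` (`twist h`; `Gmap` is its instance `M = X`). Coassociativity
gives `G_h' ∘ G_h = G_(h' ∘ G_h)`, so `IsDotOf` says exactly that `G_p` and `G_g` are mutually
inverse; this is left regularity. Since `s` is a coalgebra endomorphism of `X ⊗ X`, the maps `f`
and `g` are coalgebra maps, and `s` can be read off in either order: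
`g (x₁ ⊗ y₁) ⊗ f (x₂ ⊗ y₂) = g (x₂ ⊗ y₂) ⊗ f (x₁ ⊗ y₁)`.

Every remaining identity is an equality of maps out of `X ⊗ X`, so it suffices to check it after
precomposing with the bijection `G_g`. Writing the Sweedler expressions as iterated twists of
`onLeft`/`onRight`-maps, the factors `p ∘ G_g = id ⊗ ε` and `(f ∘ G_p) ∘ G_g = f` collapse, and
the swap property of `s` moves `f` past `g` where the two are in the wrong order.
-/

open Coalgebra (comul counit)
open scoped Coalgebra

lemma Coalgebra.sum_counit_right_smul {R A ι : Type} [CommSemiring R] [AddCommMonoid A]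
    [Module R A] [Coalgebra R A] {a : A} (𝓡 : Coalgebra.Repr R a ι) :
    ∑ i ∈ 𝓡.index, counit (R := R) (𝓡.right i) • 𝓡.left i = a := by
  have h := congrArg (_root_.TensorProduct.rid R A) (sum_tmul_counit_eq 𝓡)
  simpa only [map_sum, _root_.TensorProduct.rid_tmul, one_smul] using h

section Twist

variable {R C M N P : Type} [CommSemiring R] [AddCommMonoid C] [Module R C] [Coalgebra R C]
  [AddCommMonoid M] [Module R M] [AddCommMonoid N] [Module R N] [AddCommMonoid P] [Module R P]

def twist (h : M ⊗[R] C →ₗ[R] N) : M ⊗[R] C →ₗ[R] N ⊗[R] C :=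
  map h LinearMap.id ∘ₗ (TensorProduct.assoc R M C C).symm.toLinearMap ∘ₗ
    LinearMap.lTensor M comul

def counitRight : M ⊗[R] C →ₗ[R] M :=
  (TensorProduct.rid R M).toLinearMap ∘ₗ LinearMap.lTensor M counit

lemma rTensor_comp_twist (h : M ⊗[R] C →ₗ[R] N) (u : N →ₗ[R] P) :
    LinearMap.rTensor C u ∘ₗ twist h = twist (u ∘ₗ h) := by
  ext m y
  simp [twist, ← (ℛ R y).eq, tmul_sum]

lemma twist_comp_rTensor (h : M ⊗[R] C →ₗ[R] N) (u : P →ₗ[R] M) :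
    twist h ∘ₗ LinearMap.rTensor C u = twist (h ∘ₗ LinearMap.rTensor C u) := by
  ext m y
  simp [twist, ← (ℛ R y).eq, tmul_sum]

lemma twist_twist (h : M ⊗[R] C →ₗ[R] N) (h' : N ⊗[R] C →ₗ[R] P) (z : M ⊗[R] C) :
    twist h' (twist h z) = twist (h' ∘ₗ twist h) z := by
  refine LinearMap.congr_fun (?_ : twist h' ∘ₗ twist h = _) z
  ext m y
  have coassoc := congrArg (LinearMap.rTensor C h' ∘ₗ
      LinearMap.rTensor C (LinearMap.rTensor C (h ∘ₗ TensorProduct.mk R M C m)) ∘ₗ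
      (TensorProduct.assoc R C C C).symm.toLinearMap)
    (Coalgebra.sum_tmul_tmul_eq (ℛ R y) (fun i ↦ ℛ R ((ℛ R y).left i))
      (fun i ↦ ℛ R ((ℛ R y).right i)))
  simp [twist, ← (ℛ R y).eq, ← (ℛ R _).eq, tmul_sum, sum_tmul] at coassoc ⊢
  exact coassoc.symm

lemma twist_counitRight : twist (counitRight : M ⊗[R] C →ₗ[R] M) = LinearMap.id := by
  ext m y
  simp [twist, counitRight, ← (ℛ R y).eq, tmul_sum]
  simp only [TensorProduct.smul_tmul, ← tmul_sum, Coalgebra.sum_counit_smul]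

lemma counitRight_comp_twist (h : M ⊗[R] C →ₗ[R] N) : counitRight ∘ₗ twist h = h := by
  ext m y
  simp [twist, counitRight, ← (ℛ R y).eq, tmul_sum]
  simp only [← map_smul, ← tmul_smul, ← map_sum, ← tmul_sum, Coalgebra.sum_counit_right_smul]

end Twist

section Slots

variable {R A B C D : Type} [CommSemiring R] [AddCommMonoid A] [Module R A]
  [AddCommMonoid B] [Module R B] [AddCommMonoid C] [Module R C] [AddCommMonoid D] [Module R D]

def onRight (q : B ⊗[R] C →ₗ[R] D) : (A ⊗[R] B) ⊗[R] C →ₗ[R] A ⊗[R] D :=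
  LinearMap.lTensor A q ∘ₗ (TensorProduct.assoc R A B C).toLinearMap

def onLeft (q : A ⊗[R] C →ₗ[R] D) : (A ⊗[R] B) ⊗[R] C →ₗ[R] D ⊗[R] B :=
  LinearMap.rTensor B q ∘ₗ (TensorProduct.rightComm R A B C).toLinearMap

def onLeftComm (q : A ⊗[R] C →ₗ[R] D) : (A ⊗[R] B) ⊗[R] C →ₗ[R] B ⊗[R] D :=
  (TensorProduct.comm R D B).toLinearMap ∘ₗ onLeft q

@[simp] lemma onRight_tmul (q : B ⊗[R] C →ₗ[R] D) (a : A) (b : B) (c : C) :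
    onRight q ((a ⊗ₜ b) ⊗ₜ c) = a ⊗ₜ q (b ⊗ₜ c) := rfl

@[simp] lemma onLeft_tmul (q : A ⊗[R] C →ₗ[R] D) (a : A) (b : B) (c : C) :
    onLeft q ((a ⊗ₜ b) ⊗ₜ c) = q (a ⊗ₜ c) ⊗ₜ b := rfl

end Slots

section SlotsTwist

variable {R A A' B C D : Type} [CommSemiring R] [AddCommMonoid A] [Module R A]
  [AddCommMonoid A'] [Module R A'] [AddCommMonoid B] [Module R B]
  [AddCommMonoid C] [Module R C] [Coalgebra R C] [AddCommMonoid D] [Module R D]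

lemma onRight_twist (u : B ⊗[R] C →ₗ[R] D) (w : A' ⊗[R] C →ₗ[R] B) :
    onRight (A := A) (u ∘ₗ twist w) = onRight u ∘ₗ twist (onRight w) := by
  ext a b y
  simp [twist, ← (ℛ R y).eq, tmul_sum]

lemma onLeft_twist (u : A ⊗[R] C →ₗ[R] D) (w : A' ⊗[R] C →ₗ[R] A) (v : (A' ⊗[R] B) ⊗[R] C) :
    onLeft u (twist (onLeft w) v) = onLeft (u ∘ₗ twist w) v := by
  refine LinearMap.congr_fun (?_ : onLeft u ∘ₗ twist (onLeft w) = _) v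
  ext a b y
  simp [twist, ← (ℛ R y).eq, tmul_sum, sum_tmul]

lemma onRight_counitRight :
    onRight (counitRight : B ⊗[R] C →ₗ[R] B) = (counitRight : (A ⊗[R] B) ⊗[R] C →ₗ[R] _) := by
  ext a b y
  simp [counitRight]

lemma onLeft_counitRight :
    onLeft (counitRight : A ⊗[R] C →ₗ[R] A) = (counitRight : (A ⊗[R] B) ⊗[R] C →ₗ[R] _) := by
  ext a b y
  simp [counitRight, smul_tmul']

end SlotsTwist

section TensorSquare

variable {k X}

lemma Gmap_eq_twist (f : X ⊗[k] X →ₗ[k] X) : Gmap k X f = twist f := rfl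

lemma cE_eq_counitRight : cE k X = counitRight := rfl

lemma map_cE_cE_comp_comulT : map (cE k X) (cE k X) ∘ₗ comulT k X = comul ∘ₗ cE k X := by
  ext x y
  conv_rhs => rw [← Coalgebra.sum_counit_smul (ℛ k y)]
  simp [comulT, cE, ← (ℛ k x).eq, ← (ℛ k y).eq, tmul_sum, sum_tmul, Finset.smul_sum, smul_tmul',
    tmul_smul, smul_smul, mul_comm]

lemma map_cE'_cE'_comp_comulT : map (cE' k X) (cE' k X) ∘ₗ comulT k X = comul ∘ₗ cE' k X := by
  ext x y
  conv_rhs => rw [← Coalgebra.sum_counit_smul (ℛ k x)]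
  simp [comulT, cE', ← (ℛ k x).eq, ← (ℛ k y).eq, tmul_sum, sum_tmul, Finset.smul_sum, smul_tmul',
    tmul_smul, smul_smul, mul_comm]
  exact Finset.sum_comm

lemma map_cE_cE'_comp_comulT : map (cE k X) (cE' k X) ∘ₗ comulT k X = LinearMap.id := by
  ext x y
  conv_rhs => rw [← Coalgebra.sum_counit_smul (ℛ k y), ← Coalgebra.sum_counit_right_smul (ℛ k x)]
  simp [comulT, cE, cE', ← (ℛ k x).eq, ← (ℛ k y).eq, tmul_sum, sum_tmul, smul_tmul', tmul_smul,
    Finset.smul_sum, smul_smul, mul_comm]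

lemma map_cE'_cE_comp_comulT :
    map (cE' k X) (cE k X) ∘ₗ comulT k X = (TensorProduct.comm k X X).toLinearMap := by
  ext x y
  conv_rhs => rw [← Coalgebra.sum_counit_smul (ℛ k x), ← Coalgebra.sum_counit_right_smul (ℛ k y)]
  simp [comulT, cE, cE', ← (ℛ k x).eq, ← (ℛ k y).eq, tmul_sum, sum_tmul, smul_tmul', tmul_smul,
    Finset.smul_sum, smul_smul, mul_comm]

lemma counit_comp_cE : counit ∘ₗ cE k X = counitT k X := by
  ext x y
  simp [cE, counitT, mul_comm]

lemma counit_comp_cE' : counit ∘ₗ cE' k X = counitT k X := by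
  ext x y
  simp [cE', counitT]

lemma counitT_comp_comm : counitT k X ∘ₗ (TensorProduct.comm k X X).toLinearMap = counitT k X := by
  ext x y
  simp [counitT, mul_comm]

lemma comm_comp_comulTCop_comp_comm :
    (TensorProduct.comm k (X ⊗[k] X) (X ⊗[k] X)).toLinearMap ∘ₗ comulTCop k X ∘ₗ
        (TensorProduct.comm k X X).toLinearMap =
      map (TensorProduct.comm k X X).toLinearMap (TensorProduct.comm k X X).toLinearMap ∘ₗ
        comulTCop k X := by
  ext x y
  simp [comulTCop, comulCop, ← (ℛ k x).eq, ← (ℛ k y).eq, tmul_sum, sum_tmul]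
  exact Finset.sum_comm

def comulLeft : X ⊗[k] X →ₗ[k] (X ⊗[k] X) ⊗[k] X := LinearMap.rTensor X comul

lemma map_comp_comulT_eq_onRight (q r : X ⊗[k] X →ₗ[k] X) :
    map q r ∘ₗ comulT k X = onRight r ∘ₗ twist (onLeft q) ∘ₗ comulLeft := by
  ext x y
  simp [comulT, comulLeft, twist, ← (ℛ k x).eq, ← (ℛ k y).eq, tmul_sum, sum_tmul]
  exact Finset.sum_comm

lemma map_comp_comulT_eq_comm_onLeft (q r : X ⊗[k] X →ₗ[k] X) :
    map q r ∘ₗ comulT k X =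
      (TensorProduct.comm k X X).toLinearMap ∘ₗ onLeft r ∘ₗ twist (onLeftComm q) ∘ₗ comulLeft := by
  ext x y
  simp [comulT, comulLeft, twist, ← (ℛ k x).eq, ← (ℛ k y).eq, tmul_sum, sum_tmul]
  exact Finset.sum_comm

lemma map_comp_comulTCop (q r : X ⊗[k] X →ₗ[k] X) :
    map q r ∘ₗ comulTCop k X = onLeft q ∘ₗ twist (onRight r) ∘ₗ comulLeft := by
  ext x y
  simp [comulTCop, comulCop, comulLeft, twist, ← (ℛ k x).eq, ← (ℛ k y).eq, tmul_sum, sum_tmul]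
  exact Finset.sum_comm

lemma onLeft_cE_comp_comulLeft : onLeft (cE k X) ∘ₗ comulLeft = comul ∘ₗ cE k X := by
  ext x y
  simp [cE, comulLeft, ← (ℛ k x).eq, sum_tmul, Finset.smul_sum, smul_tmul']

lemma twist_comp_twist_comp_comulLeft {N P : Type} [AddCommMonoid N] [Module k N]
    [AddCommMonoid P] [Module k P]
    (A : N ⊗[k] X →ₗ[k] P) (B : (X ⊗[k] X) ⊗[k] X →ₗ[k] N) (z : X ⊗[k] X) :
    twist (A ∘ₗ twist B ∘ₗ comulLeft) z = twist A (twist B (comulLeft z)) := by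
  rw [twist_twist, comulLeft, ← LinearMap.comp_assoc, ← twist_comp_rTensor]
  rfl

end TensorSquare

section CoalgEndo

variable {k X} {s : X ⊗[k] X →ₗ[k] X ⊗[k] X}

lemma IsCoalgEndo.map_comp_comp_comulT (hs : IsCoalgEndo k X s) {V W : Type}
    [AddCommMonoid V] [Module k V] [AddCommMonoid W] [Module k W]
    (a : X ⊗[k] X →ₗ[k] V) (b : X ⊗[k] X →ₗ[k] W) :
    map (a ∘ₗ s) (b ∘ₗ s) ∘ₗ comulT k X = map a b ∘ₗ comulT k X ∘ₗ s := by
  rw [hs.1, TensorProduct.map_comp, LinearMap.comp_assoc]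

lemma IsCoalgEndo.comul_comp1 (hs : IsCoalgEndo k X s) :
    comul ∘ₗ comp1 k X s = map (comp1 k X s) (comp1 k X s) ∘ₗ comulT k X := by
  rw [comp1, hs.map_comp_comp_comulT, ← LinearMap.comp_assoc s (comulT k X),
    map_cE_cE_comp_comulT, LinearMap.comp_assoc]

lemma IsCoalgEndo.comul_comp2 (hs : IsCoalgEndo k X s) :
    comul ∘ₗ comp2 k X s = map (comp2 k X s) (comp2 k X s) ∘ₗ comulT k X := by
  rw [comp2, hs.map_comp_comp_comulT, ← LinearMap.comp_assoc s (comulT k X),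
    map_cE'_cE'_comp_comulT, LinearMap.comp_assoc]

lemma IsCoalgEndo.counit_comp1 (hs : IsCoalgEndo k X s) :
    counit ∘ₗ comp1 k X s = counitT k X := by
  rw [comp1, ← LinearMap.comp_assoc, counit_comp_cE, hs.2]

lemma IsCoalgEndo.counit_comp2 (hs : IsCoalgEndo k X s) :
    counit ∘ₗ comp2 k X s = counitT k X := by
  rw [comp2, ← LinearMap.comp_assoc, counit_comp_cE', hs.2]

lemma IsCoalgEndo.map_comp2_comp1_comp_comulT (hs : IsCoalgEndo k X s) :
    map (comp2 k X s) (comp1 k X s) ∘ₗ comulT k X =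
      (TensorProduct.comm k X X).toLinearMap ∘ₗ map (comp1 k X s) (comp2 k X s) ∘ₗ comulT k X := by
  rw [comp1, comp2, hs.map_comp_comp_comulT, hs.map_comp_comp_comulT, ← LinearMap.comp_assoc s,
    map_cE'_cE_comp_comulT, ← LinearMap.comp_assoc s, map_cE_cE'_comp_comulT, LinearMap.id_comp]

lemma IsCoalgEndo.twist_onRight_comulLeft_twist (hs : IsCoalgEndo k X s)
    (r : X ⊗[k] X →ₗ[k] X) (z : X ⊗[k] X) :
    twist (onRight r) (comulLeft (twist (comp2 k X s) z)) =
      twist (onRight (r ∘ₗ twist (comp2 k X s))) (twist (onLeft (comp2 k X s)) (comulLeft z)) := by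
  have serial : comulLeft (twist (comp2 k X s) z) =
      twist (onRight (comp2 k X s)) (twist (onLeft (comp2 k X s)) (comulLeft z)) := by
    rw [← twist_comp_twist_comp_comulLeft, ← map_comp_comulT_eq_onRight, ← hs.comul_comp2,
      ← rTensor_comp_twist]
    rfl
  rw [serial, twist_twist, onRight_twist]

lemma IsCoalgEndo.twist_onRight_twist_onLeft_comulLeft (hs : IsCoalgEndo k X s) (z : X ⊗[k] X) :
    twist (onRight (comp1 k X s)) (twist (onLeft (comp2 k X s)) (comulLeft z)) =
      twist (onLeft (comp2 k X s)) (twist (onLeftComm (comp1 k X s)) (comulLeft z)) := by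
  rw [← twist_comp_twist_comp_comulLeft, ← twist_comp_twist_comp_comulLeft,
    ← map_comp_comulT_eq_onRight, hs.map_comp2_comp1_comp_comulT, map_comp_comulT_eq_comm_onLeft,
    ← LinearMap.comp_assoc, TensorProduct.comm_comp_comm, LinearMap.id_comp]

end CoalgEndo

section Dot

variable {k X} {s : X ⊗[k] X →ₗ[k] X ⊗[k] X} {p : X ⊗[k] X →ₗ[k] X}

lemma IsDotOf.dot_comp_twist (hp : IsDotOf k X s p) :
    p ∘ₗ twist (comp2 k X s) = counitRight :=
  hp.2

lemma IsDotOf.twist_comp2_twist_dot (hp : IsDotOf k X s p) (z : X ⊗[k] X) :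
    twist (comp2 k X s) (twist p z) = z := by
  rw [twist_twist, ← Gmap_eq_twist p, hp.1, cE_eq_counitRight, twist_counitRight,
    LinearMap.id_apply]

lemma IsDotOf.twist_dot_twist_comp2 (hp : IsDotOf k X s p) (z : X ⊗[k] X) :
    twist p (twist (comp2 k X s) z) = z := by
  rw [twist_twist, hp.dot_comp_twist, twist_counitRight, LinearMap.id_apply]

lemma IsDotOf.eq_comp_twist_dot (hp : IsDotOf k X s p) {V : Type} [AddCommMonoid V] [Module k V]
    {F K : X ⊗[k] X →ₗ[k] V} (h : ∀ z, F (twist (comp2 k X s) z) = K z) :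
    F = K ∘ₗ twist p :=
  LinearMap.ext fun z ↦ by rw [LinearMap.comp_apply, ← h, hp.twist_comp2_twist_dot]

def dOfFlip (s : X ⊗[k] X →ₗ[k] X ⊗[k] X) (p : X ⊗[k] X →ₗ[k] X) : X ⊗[k] X →ₗ[k] X :=
  comp1 k X s ∘ₗ twist p

lemma dOf_eq_dOfFlip_comp_comm :
    dOf k X s p = dOfFlip s p ∘ₗ (TensorProduct.comm k X X).toLinearMap :=
  rfl

lemma IsDotOf.dOfFlip_comp_twist (hp : IsDotOf k X s p) :
    dOfFlip s p ∘ₗ twist (comp2 k X s) = comp1 k X s :=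
  LinearMap.ext fun z ↦ by simp [dOfFlip, hp.twist_dot_twist_comp2]

lemma IsDotOf.onLeft_twist_onRight_dot (hs : IsCoalgEndo k X s) (hp : IsDotOf k X s p)
    (q : X ⊗[k] X →ₗ[k] X) (z : X ⊗[k] X) :
    onLeft q (twist (onRight p) (comulLeft (twist (comp2 k X s) z))) =
      onLeft (q ∘ₗ twist (comp2 k X s)) (comulLeft z) := by
  rw [hs.twist_onRight_comulLeft_twist, hp.dot_comp_twist, onRight_counitRight, twist_counitRight,
    LinearMap.id_apply, onLeft_twist]

lemma IsDotOf.onLeft_twist_onRight_dOfFlip (hs : IsCoalgEndo k X s) (hp : IsDotOf k X s p)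
    (q : X ⊗[k] X →ₗ[k] X) (z : X ⊗[k] X) :
    onLeft q (twist (onRight (dOfFlip s p)) (comulLeft (twist (comp2 k X s) z))) =
      onLeft (q ∘ₗ twist (comp2 k X s)) (twist (onLeftComm (comp1 k X s)) (comulLeft z)) := by
  rw [hs.twist_onRight_comulLeft_twist, hp.dOfFlip_comp_twist,
    hs.twist_onRight_twist_onLeft_comulLeft, onLeft_twist]

lemma IsDotOf.comul_comp_dot (hs : IsCoalgEndo k X s) (hp : IsDotOf k X s p) :
    comul ∘ₗ p = map p p ∘ₗ comulTCop k X := by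
  have core (z : X ⊗[k] X) :
      (map p p ∘ₗ comulTCop k X) (twist (comp2 k X s) z) = (comul ∘ₗ counitRight) z := calc
    _ = onLeft p (twist (onRight p) (comulLeft (twist (comp2 k X s) z))) :=
      LinearMap.congr_fun (map_comp_comulTCop p p) _
    _ = onLeft counitRight (comulLeft z) := by
      rw [hp.onLeft_twist_onRight_dot hs, hp.dot_comp_twist]
    _ = comul (counitRight z) := LinearMap.congr_fun onLeft_cE_comp_comulLeft z
  rw [hp.eq_comp_twist_dot core, LinearMap.comp_assoc, counitRight_comp_twist]

lemma IsDotOf.comul_comp_dOfFlip (hs : IsCoalgEndo k X s) (hp : IsDotOf k X s p) :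
    comul ∘ₗ dOfFlip s p = map (dOfFlip s p) (dOfFlip s p) ∘ₗ
      (TensorProduct.comm k (X ⊗[k] X) (X ⊗[k] X)).toLinearMap ∘ₗ comulTCop k X := by
  have core (z : X ⊗[k] X) : (map (dOfFlip s p) (dOfFlip s p) ∘ₗ
      (TensorProduct.comm k (X ⊗[k] X) (X ⊗[k] X)).toLinearMap ∘ₗ comulTCop k X)
        (twist (comp2 k X s) z) = (comul ∘ₗ comp1 k X s) z := calc
    _ = TensorProduct.comm k X X (onLeft (dOfFlip s p)
          (twist (onRight (dOfFlip s p)) (comulLeft (twist (comp2 k X s) z)))) := by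
      rw [← LinearMap.comp_assoc, TensorProduct.map_comp_comm_eq, LinearMap.comp_assoc,
        map_comp_comulTCop]
      rfl
    _ = TensorProduct.comm k X X (onLeft (comp1 k X s)
          (twist (onLeftComm (comp1 k X s)) (comulLeft z))) := by
      rw [hp.onLeft_twist_onRight_dOfFlip hs, hp.dOfFlip_comp_twist]
    _ = map (comp1 k X s) (comp1 k X s) (comulT k X z) :=
      (LinearMap.congr_fun (map_comp_comulT_eq_comm_onLeft _ _) z).symm
    _ = comul (comp1 k X s z) := (LinearMap.congr_fun hs.comul_comp1 z).symm
  exact (hp.eq_comp_twist_dot core).symm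

lemma IsDotOf.comul_comp_dOf (hs : IsCoalgEndo k X s) (hp : IsDotOf k X s p) :
    comul ∘ₗ dOf k X s p = map (dOf k X s p) (dOf k X s p) ∘ₗ comulTCop k X := by
  rw [dOf_eq_dOfFlip_comp_comm, ← LinearMap.comp_assoc, hp.comul_comp_dOfFlip hs,
    LinearMap.comp_assoc, LinearMap.comp_assoc, comm_comp_comulTCop_comp_comm,
    ← LinearMap.comp_assoc, ← TensorProduct.map_comp]

lemma IsDotOf.map_dOfFlip_dot_comp_comm_comp_comulTCop (hs : IsCoalgEndo k X s)
    (hp : IsDotOf k X s p) :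
    map (dOfFlip s p) p ∘ₗ (TensorProduct.comm k (X ⊗[k] X) (X ⊗[k] X)).toLinearMap ∘ₗ
      comulTCop k X = map (dOfFlip s p) p ∘ₗ comulTCop k X := by
  have lhs (z : X ⊗[k] X) : (map (dOfFlip s p) p ∘ₗ
      (TensorProduct.comm k (X ⊗[k] X) (X ⊗[k] X)).toLinearMap ∘ₗ comulTCop k X)
        (twist (comp2 k X s) z) = (onLeft (comp1 k X s) ∘ₗ comulLeft) z := calc
    _ = TensorProduct.comm k X X
          (onLeft p (twist (onRight (dOfFlip s p)) (comulLeft (twist (comp2 k X s) z)))) := by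
      rw [← LinearMap.comp_assoc, TensorProduct.map_comp_comm_eq, LinearMap.comp_assoc,
        map_comp_comulTCop]
      rfl
    _ = TensorProduct.comm k X X (counitRight
          (twist (onLeftComm (comp1 k X s)) (comulLeft z))) := by
      rw [hp.onLeft_twist_onRight_dOfFlip hs, hp.dot_comp_twist, onLeft_counitRight]
    _ = onLeft (comp1 k X s) (comulLeft z) := by
      rw [← LinearMap.comp_apply counitRight, counitRight_comp_twist]
      simp [onLeftComm]
  have rhs (z : X ⊗[k] X) : (map (dOfFlip s p) p ∘ₗ comulTCop k X) (twist (comp2 k X s) z) =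
      (onLeft (comp1 k X s) ∘ₗ comulLeft) z := by
    rw [map_comp_comulTCop]
    simp only [LinearMap.comp_apply]
    rw [hp.onLeft_twist_onRight_dot hs, hp.dOfFlip_comp_twist]
  rw [hp.eq_comp_twist_dot lhs, hp.eq_comp_twist_dot rhs]

lemma exchangeId_of_map_comp_comm_comp_comulTCop (p d : X ⊗[k] X →ₗ[k] X)
    (h : map (d ∘ₗ (TensorProduct.comm k X X).toLinearMap) p ∘ₗ
        (TensorProduct.comm k (X ⊗[k] X) (X ⊗[k] X)).toLinearMap ∘ₗ comulTCop k X =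
      map (d ∘ₗ (TensorProduct.comm k X X).toLinearMap) p ∘ₗ comulTCop k X) :
    ExchangeId k X p d := by
  intro x y n m x1 x2 y1 y2 hx hy
  have := LinearMap.congr_fun h (x ⊗ₜ y)
  rw [Finset.sum_comm]
  conv_rhs => rw [Finset.sum_comm]
  simpa [comulTCop, comulCop, ← hx, ← hy, tmul_sum, sum_tmul] using this

lemma IsDotOf.exchangeId (hs : IsCoalgEndo k X s) (hp : IsDotOf k X s p) :
    ExchangeId k X p (dOf k X s p) := by
  apply exchangeId_of_map_comp_comm_comp_comulTCop
  rw [dOf_eq_dOfFlip_comp_comm, LinearMap.comp_assoc, TensorProduct.comm_comp_comm,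
    LinearMap.comp_id]
  exact hp.map_dOfFlip_dot_comp_comm_comp_comulTCop hs

lemma IsDotOf.counitT_comp_twist_dot (hs : IsCoalgEndo k X s) (hp : IsDotOf k X s p) :
    counitT k X ∘ₗ twist p = counitT k X := by
  have h : counitT k X ∘ₗ twist (comp2 k X s) = counitT k X := calc
    _ = counit ∘ₗ counitRight ∘ₗ twist (comp2 k X s) := by
      rw [← counit_comp_cE, LinearMap.comp_assoc, cE_eq_counitRight]
    _ = counitT k X := by rw [counitRight_comp_twist, hs.counit_comp2]
  exact (hp.eq_comp_twist_dot (LinearMap.congr_fun h)).symm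

lemma IsDotOf.counit_comp_dot (hs : IsCoalgEndo k X s) (hp : IsDotOf k X s p) :
    counit ∘ₗ p = counitT k X := by
  rw [← counitRight_comp_twist p, ← LinearMap.comp_assoc, ← cE_eq_counitRight, counit_comp_cE,
    hp.counitT_comp_twist_dot hs]

lemma IsDotOf.counit_comp_dOf (hs : IsCoalgEndo k X s) (hp : IsDotOf k X s p) :
    counit ∘ₗ dOf k X s p = counitT k X := by
  rw [dOf_eq_dOfFlip_comp_comm, dOfFlip, ← LinearMap.comp_assoc, ← LinearMap.comp_assoc,
    hs.counit_comp1, hp.counitT_comp_twist_dot hs, counitT_comp_comm]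

lemma IsDotOf.bijective_Gmap (hp : IsDotOf k X s p) : Function.Bijective (Gmap k X p) :=
  Function.bijective_iff_has_inverse.mpr
    ⟨twist (comp2 k X s), hp.twist_comp2_twist_dot, hp.twist_dot_twist_comp2⟩

end Dot

theorem stmt_3 (s : X ⊗[k] X →ₗ[k] X ⊗[k] X) (hs : IsCoalgEndo k X s)
    (p : X ⊗[k] X →ₗ[k] X) (hp : IsDotOf k X s p) :
    IsCoalgMorCop k X p ∧ IsCoalgMorCop k X (dOf k X s p) ∧
      ExchangeId k X p (dOf k X s p) ∧ Function.Bijective (Gmap k X p) :=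
  ⟨⟨hp.comul_comp_dot hs, hp.counit_comp_dot hs⟩, ⟨hp.comul_comp_dOf hs, hp.counit_comp_dOf hs⟩,
    hp.exchangeId hs, hp.bijective_Gmap⟩

end
end

section
/- Let ℋ = (H; ·, ⊥) be a Hopf q-brace and s(h⊗k) = ^{h_(1)}k_(1) ⊗ h_(2)^{k_(2)} its associated braid-equation solution. Then (H,s) is a braiding operator, i.e., μ∘s = μ where μ is multiplication, if and only if ℋ is a Hopf skew-brace, i.e., (k⊥h_(2))h_(1) = (h·k_(1))k_(2) for all h,k ∈ H. -/
open TensorProduct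

noncomputable section

variable (k : Type) [Field k] (X : Type) [AddCommGroup X] [Module k X] [Coalgebra k X]

variable (H : Type) [Ring H] [HopfAlgebra k H]

/-- `(H, ·)` is a right module over `H^op`: `h·1 = h` and `h·(ab) = (h·b)·a` -/
def RightOpModule (p : H ⊗[k] H →ₗ[k] H) : Prop :=
  (∀ h : H, p (h ⊗ₜ[k] (1 : H)) = h) ∧
  ∀ h a b : H, p (h ⊗ₜ[k] (a * b)) = p (p (h ⊗ₜ[k] b) ⊗ₜ[k] a)

/-- the Hopf q-brace distributivity laws -/
def QBraceDistrib (p d : H ⊗[k] H →ₗ[k] H) : Prop :=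
  ∀ (h kk l : H) (n m : ℕ) (l1 l2 : Fin n → H) (k1 k2 : Fin m → H),
    (∑ i, l1 i ⊗ₜ[k] l2 i) = Coalgebra.comul (R := k) l →
    (∑ j, k1 j ⊗ₜ[k] k2 j) = Coalgebra.comul (R := k) kk →
    (p ((h * kk) ⊗ₜ[k] l) =
        ∑ i, ∑ j, p (h ⊗ₜ[k] d (l1 i ⊗ₜ[k] k2 j)) * p (k1 j ⊗ₜ[k] l2 i)) ∧
    (d ((h * kk) ⊗ₜ[k] l) =
        ∑ i, ∑ j, d (h ⊗ₜ[k] p (l1 i ⊗ₜ[k] k2 j)) * d (k1 j ⊗ₜ[k] l2 i))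

/-- A Hopf q-brace: a regular q-cycle coalgebra on a Hopf algebra with
right `H^op`-module structures and the distributivity laws -/
def IsHopfQBrace (p d : H ⊗[k] H →ₗ[k] H) : Prop :=
  IsCoalgMorCop k H p ∧ IsCoalgMorCop k H d ∧ ExchangeId k H p d ∧
  Function.Bijective (Gmap k H p) ∧ Function.Bijective (GmapCop k H d) ∧
  QCycleConds k H p d ∧ RightOpModule k H p ∧ RightOpModule k H d ∧ QBraceDistrib k H p d

/-- the Hopf skew-brace condition `(k⊥h₍₂₎)h₍₁₎ = (h·k₍₁₎)k₍₂₎` -/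
def SkewCond (p d : H ⊗[k] H →ₗ[k] H) : Prop :=
  ∀ (h kk : H) (n m : ℕ) (h1 h2 : Fin n → H) (k1 k2 : Fin m → H),
    (∑ i, h1 i ⊗ₜ[k] h2 i) = Coalgebra.comul (R := k) h →
    (∑ j, k1 j ⊗ₜ[k] k2 j) = Coalgebra.comul (R := k) kk →
    (∑ i, d (kk ⊗ₜ[k] h2 i) * h1 i) = ∑ j, p (h ⊗ₜ[k] k1 j) * k2 j

def IsHopfSkewBrace (p d : H ⊗[k] H →ₗ[k] H) : Prop :=
  IsHopfQBrace k H p d ∧ SkewCond k H p d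

/-- weak braiding operator conditions -/
def IsWeakBraidingOp (s : H ⊗[k] H →ₗ[k] H ⊗[k] H) : Prop :=
  (s ∘ₗ LinearMap.rTensor H (LinearMap.mul' k H) =
    LinearMap.lTensor H (LinearMap.mul' k H) ∘ₗ (TensorProduct.assoc k H H H).toLinearMap ∘ₗ
      LinearMap.rTensor H s ∘ₗ (TensorProduct.assoc k H H H).symm.toLinearMap ∘ₗ
      LinearMap.lTensor H s ∘ₗ (TensorProduct.assoc k H H H).toLinearMap) ∧
  (s ∘ₗ LinearMap.lTensor H (LinearMap.mul' k H) =
    LinearMap.rTensor H (LinearMap.mul' k H) ∘ₗ (TensorProduct.assoc k H H H).symm.toLinearMap ∘ₗ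
      LinearMap.lTensor H s ∘ₗ (TensorProduct.assoc k H H H).toLinearMap ∘ₗ
      LinearMap.rTensor H s ∘ₗ (TensorProduct.assoc k H H H).symm.toLinearMap) ∧
  (∀ h : H, s ((1 : H) ⊗ₜ[k] h) = h ⊗ₜ[k] (1 : H)) ∧
  (∀ h : H, s (h ⊗ₜ[k] (1 : H)) = (1 : H) ⊗ₜ[k] h)

/-- `(H, H, α, β)` is a matched pair of bialgebras -/
def IsMatchedPairSelf (α β : H ⊗[k] H →ₗ[k] H) : Prop :=
  ((∀ l : H, α (l ⊗ₜ[k] (1 : H)) = l) ∧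
   (∀ l a b : H, α (l ⊗ₜ[k] (a * b)) = α (α (l ⊗ₜ[k] a) ⊗ₜ[k] b))) ∧
  IsCoalgMor k H α ∧
  ((∀ h : H, β ((1 : H) ⊗ₜ[k] h) = h) ∧
   (∀ a b h : H, β ((a * b) ⊗ₜ[k] h) = β (a ⊗ₜ[k] β (b ⊗ₜ[k] h)))) ∧
  IsCoalgMor k H β ∧
  (∀ (l h h' : H) (n m : ℕ) (l1 l2 : Fin n → H) (h1 h2 : Fin m → H),
     (∑ i, l1 i ⊗ₜ[k] l2 i) = Coalgebra.comul (R := k) l →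
     (∑ j, h1 j ⊗ₜ[k] h2 j) = Coalgebra.comul (R := k) h →
     β (l ⊗ₜ[k] (h * h')) =
       ∑ i, ∑ j, β (l1 i ⊗ₜ[k] h1 j) * β (α (l2 i ⊗ₜ[k] h2 j) ⊗ₜ[k] h')) ∧
  (∀ (l' l h : H) (n m : ℕ) (l1 l2 : Fin n → H) (h1 h2 : Fin m → H),
     (∑ i, l1 i ⊗ₜ[k] l2 i) = Coalgebra.comul (R := k) l →
     (∑ j, h1 j ⊗ₜ[k] h2 j) = Coalgebra.comul (R := k) h →
     α ((l' * l) ⊗ₜ[k] h) =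
       ∑ i, ∑ j, α (l' ⊗ₜ[k] β (l1 i ⊗ₜ[k] h1 j)) * α (l2 i ⊗ₜ[k] h2 j)) ∧
  (∀ h : H, α ((1 : H) ⊗ₜ[k] h) = Coalgebra.counit (R := k) h • (1 : H)) ∧
  (∀ l : H, β (l ⊗ₜ[k] (1 : H)) = Coalgebra.counit (R := k) l • (1 : H)) ∧
  (∀ (l h : H) (n m : ℕ) (l1 l2 : Fin n → H) (h1 h2 : Fin m → H),
     (∑ i, l1 i ⊗ₜ[k] l2 i) = Coalgebra.comul (R := k) l →
     (∑ j, h1 j ⊗ₜ[k] h2 j) = Coalgebra.comul (R := k) h →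
     (∑ i, ∑ j, β (l1 i ⊗ₜ[k] h1 j) ⊗ₜ[k] α (l2 i ⊗ₜ[k] h2 j)) =
       ∑ i, ∑ j, β (l2 i ⊗ₜ[k] h2 j) ⊗ₜ[k] α (l1 i ⊗ₜ[k] h1 j))

/-! Since `G_p : h ⊗ k ↦ h·k₍₁₎ ⊗ k₍₂₎` is bijective, `μ ∘ s = μ` holds iff
`μ ∘ s ∘ G_p = μ ∘ G_p`, and `μ (G_p (h ⊗ k)) = (h·k₍₁₎)k₍₂₎`. Write `x ⇀ y` for `ˣy`. As `·` is a
coalgebra map `H ⊗ Hᶜᵒᵖ → H`, `s (G_p (h ⊗ k)) = (h₍₁₎·k₍₂₎ ⇀ k₍₃₎) ⊗ (h₍₂₎·k₍₁₎)^{k₍₄₎}`.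
Because `x^y` is the `G`-inverse of `·`, `(x·y₍₁₎) ⇀ y₍₂₎ = y ⊥ x`, which turns this into
`k₍₂₎⊥h₍₁₎ ⊗ (h₍₂₎·k₍₁₎)^{k₍₃₎}`; the exchange identity rewrites it as
`k₍₁₎⊥h₍₂₎ ⊗ (h₍₁₎·k₍₂₎)^{k₍₃₎} = k⊥h₍₂₎ ⊗ h₍₁₎`. So `μ ∘ s ∘ G_p` is `h ⊗ k ↦ (k⊥h₍₂₎)h₍₁₎`, and
the two conditions coincide. -/

open Coalgebra

section Sweedler

variable {R M N X : Type*} [CommSemiring R] [AddCommMonoid M] [Module R M]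
  [AddCommMonoid N] [Module R N] [AddCommMonoid X] [Module R X] [Coalgebra R X]

theorem TensorProduct.exists_fin_sum_tmul_eq (t : M ⊗[R] N) :
    ∃ (n : ℕ) (a : Fin n → M) (b : Fin n → N), ∑ i, a i ⊗ₜ[R] b i = t := by
  induction t with
  | zero => exact ⟨0, Fin.elim0, Fin.elim0, by simp⟩
  | tmul m n => exact ⟨1, fun _ => m, fun _ => n, by simp⟩
  | add s t hs ht =>
    obtain ⟨n, a, b, rfl⟩ := hs
    obtain ⟨m, c, e, rfl⟩ := ht
    exact ⟨n + m, Fin.append a c, Fin.append b e, by simp [Fin.sum_univ_add]⟩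

variable {x : X} {n : ℕ} {a b : Fin n → X}

theorem sum_counit_smul_of_comul (h : ∑ i, a i ⊗ₜ[R] b i = comul x) :
    ∑ i, counit (R := R) (a i) • b i = x :=
  sum_counit_smul ⟨Finset.univ, a, b, h⟩

theorem sum_smul_counit_of_comul (h : ∑ i, a i ⊗ₜ[R] b i = comul x) :
    ∑ i, counit (R := R) (b i) • a i = x := by
  simpa [map_sum] using
    congr(TensorProduct.rid R X $(sum_tmul_counit_eq (⟨Finset.univ, a, b, h⟩ : Repr R x _)))

theorem sum_sum_map_coassoc (F : X ⊗[R] (X ⊗[R] X) →ₗ[R] M)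
    (h : ∑ i, a i ⊗ₜ[R] b i = comul x)
    {ma : Fin n → ℕ} {a₁ a₂ : ∀ i, Fin (ma i) → X}
    (ha : ∀ i, ∑ j, a₁ i j ⊗ₜ[R] a₂ i j = comul (a i))
    {mb : Fin n → ℕ} {b₁ b₂ : ∀ i, Fin (mb i) → X}
    (hb : ∀ i, ∑ j, b₁ i j ⊗ₜ[R] b₂ i j = comul (b i)) :
    ∑ i, ∑ j, F (a₁ i j ⊗ₜ (a₂ i j ⊗ₜ b i)) = ∑ i, ∑ j, F (a i ⊗ₜ (b₁ i j ⊗ₜ b₂ i j)) := by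
  simpa only [map_sum] using congr(F $(sum_tmul_tmul_eq (⟨Finset.univ, a, b, h⟩ : Repr R x _)
    (fun i => ⟨Finset.univ, a₁ i, a₂ i, ha i⟩) (fun i => ⟨Finset.univ, b₁ i, b₂ i, hb i⟩)))

theorem map_comul_comul_comp_comul :
    TensorProduct.map comul comul ∘ₗ (comul : X →ₗ[R] X ⊗[R] X) =
      (TensorProduct.assoc R (X ⊗[R] X) X X).toLinearMap ∘ₗ
        TensorProduct.map (TensorProduct.assoc R X X X).symm.toLinearMap LinearMap.id ∘ₗ
        TensorProduct.map (TensorProduct.map LinearMap.id comul) LinearMap.id ∘ₗ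
        TensorProduct.map comul LinearMap.id ∘ₗ comul := by
  simp only [coassoc_simps]

theorem sum_sum_sum_map_coassoc₄ (Λ : (X ⊗[R] X) ⊗[R] (X ⊗[R] X) →ₗ[R] M)
    (h : ∑ i, a i ⊗ₜ[R] b i = comul x)
    {ma : Fin n → ℕ} {a₁ a₂ : ∀ i, Fin (ma i) → X}
    (ha : ∀ i, ∑ j, a₁ i j ⊗ₜ[R] a₂ i j = comul (a i))
    {mb : Fin n → ℕ} {b₁ b₂ : ∀ i, Fin (mb i) → X}
    (hb : ∀ i, ∑ j, b₁ i j ⊗ₜ[R] b₂ i j = comul (b i))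
    {mc : ∀ i, Fin (ma i) → ℕ} {c₁ c₂ : ∀ i j, Fin (mc i j) → X}
    (hc : ∀ i j, ∑ l, c₁ i j l ⊗ₜ[R] c₂ i j l = comul (a₂ i j)) :
    ∑ i, ∑ j, ∑ l, Λ ((a₁ i j ⊗ₜ a₂ i j) ⊗ₜ (b₁ i l ⊗ₜ b₂ i l)) =
      ∑ i, ∑ j, ∑ l, Λ ((a₁ i j ⊗ₜ c₁ i j l) ⊗ₜ (c₂ i j l ⊗ₜ b i)) := by
  have hcoassoc := congr(Λ $(LinearMap.congr_fun map_comul_comul_comp_comul x))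
  simp only [LinearMap.comp_apply, ← h, map_sum, TensorProduct.map_tmul, ← ha, ← hb, ← hc,
    LinearMap.id_apply, TensorProduct.sum_tmul, TensorProduct.tmul_sum, LinearEquiv.coe_coe,
    TensorProduct.assoc_symm_tmul, TensorProduct.assoc_tmul] at hcoassoc
  rw [← hcoassoc]
  exact Finset.sum_congr rfl fun i _ => Finset.sum_comm

end Sweedler

section QBrace

variable {k X H}

section Gmap

variable {x y : X} {n : ℕ} {c e : Fin n → X}

theorem Gmap_tmul_s16 (f : X ⊗[k] X →ₗ[k] X) (hy : ∑ j, c j ⊗ₜ[k] e j = comul y) :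
    Gmap k X f (x ⊗ₜ y) = ∑ j, f (x ⊗ₜ c j) ⊗ₜ e j := by
  simp [Gmap, ← hy, TensorProduct.tmul_sum]

theorem GmapCop_tmul_s16 (f : X ⊗[k] X →ₗ[k] X) (hy : ∑ j, c j ⊗ₜ[k] e j = comul y) :
    GmapCop k X f (x ⊗ₜ y) = ∑ j, f (x ⊗ₜ e j) ⊗ₜ c j := by
  simp [GmapCop, comulCop, ← hy, TensorProduct.tmul_sum]

theorem Gmap_comp_Gmap (f f' : X ⊗[k] X →ₗ[k] X) :
    Gmap k X f ∘ₗ Gmap k X f' = Gmap k X (f ∘ₗ Gmap k X f') := by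
  refine TensorProduct.ext' fun x y => ?_
  obtain ⟨n, u, w, hy⟩ := TensorProduct.exists_fin_sum_tmul_eq (comul (R := k) y)
  choose mu u₁ u₂ hu using fun i => TensorProduct.exists_fin_sum_tmul_eq (comul (R := k) (u i))
  choose mw w₁ w₂ hw using fun i => TensorProduct.exists_fin_sum_tmul_eq (comul (R := k) (w i))
  have := sum_sum_map_coassoc (TensorProduct.map (f ∘ₗ TensorProduct.map (f' ∘ₗ
    TensorProduct.mk k X X x) LinearMap.id) LinearMap.id ∘ₗ
    (TensorProduct.assoc k X X X).symm.toLinearMap) hy hu hw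
  simp only [LinearMap.comp_apply, Gmap_tmul_s16 _ hy, map_sum, Gmap_tmul_s16 _ (hw _), Gmap_tmul_s16 _ (hu _),
    TensorProduct.sum_tmul]
  simpa using this.symm

theorem Gmap_cE : Gmap k X (cE k X) = LinearMap.id := by
  refine TensorProduct.ext' fun x y => ?_
  obtain ⟨n, c, e, hy⟩ := TensorProduct.exists_fin_sum_tmul_eq (comul (R := k) y)
  simp only [Gmap_tmul_s16 _ hy, cE, LinearMap.comp_apply, LinearMap.lTensor_tmul,
    LinearEquiv.coe_coe, TensorProduct.rid_tmul, TensorProduct.smul_tmul, ← TensorProduct.tmul_sum,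
    sum_counit_smul_of_comul hy, LinearMap.id_apply]

end Gmap

section QCycle

variable {p d g : X ⊗[k] X →ₗ[k] X}

theorem bOf_comp_Gmap (hg : g ∘ₗ Gmap k X p = cE k X) :
    bOf k X g d ∘ₗ Gmap k X p = d ∘ₗ (TensorProduct.comm k X X).toLinearMap := by
  rw [bOf, LinearMap.comp_assoc, LinearMap.comp_assoc, Gmap_comp_Gmap, hg, Gmap_cE,
    LinearMap.comp_id]

theorem comulT_tmul_s16 (y z : X) :
    comulT k X (y ⊗ₜ z) =
      TensorProduct.tensorTensorTensorComm k X X X X (comul (R := k) y ⊗ₜ comul (R := k) z) := by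
  simp [comulT]

variable {x y : X} {n m : ℕ} {a b : Fin n → X} {c e : Fin m → X}

theorem IsCoalgMorCop.comul_apply (hp : IsCoalgMorCop k X p)
    (hx : ∑ i, a i ⊗ₜ[k] b i = comul x) (hy : ∑ j, c j ⊗ₜ[k] e j = comul y) :
    comul (R := k) (p (x ⊗ₜ y)) = ∑ i, ∑ j, p (a i ⊗ₜ e j) ⊗ₜ p (b i ⊗ₜ c j) := by
  rw [← LinearMap.comp_apply, hp.1]
  simp only [comulTCop, comulCop, LinearMap.coe_comp, LinearEquiv.coe_coe, Function.comp_apply,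
    TensorProduct.map_tmul, ← hx, ← hy, map_sum, TensorProduct.comm_tmul, TensorProduct.tmul_sum,
    TensorProduct.sum_tmul, TensorProduct.tensorTensorTensorComm_tmul]
  exact Finset.sum_comm

theorem comulT_Gmap_tmul (hp : IsCoalgMorCop k X p) (hx : ∑ i, a i ⊗ₜ[k] b i = comul x)
    {u w : Fin m → X} (hy : ∑ j, u j ⊗ₜ[k] w j = comul y)
    {mu : Fin m → ℕ} {u₁ u₂ : ∀ j, Fin (mu j) → X}
    (hu : ∀ j, ∑ l, u₁ j l ⊗ₜ[k] u₂ j l = comul (u j)) :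
    comulT k X (Gmap k X p (x ⊗ₜ y)) =
      ∑ j, ∑ i, ∑ l, Gmap k X p (a i ⊗ₜ u₂ j l) ⊗ₜ (p (b i ⊗ₜ u₁ j l) ⊗ₜ w j) := by
  choose mw w₁ w₂ hw using fun j => TensorProduct.exists_fin_sum_tmul_eq (comul (R := k) (w j))
  choose mv v₁ v₂ hv using fun j l =>
    TensorProduct.exists_fin_sum_tmul_eq (comul (R := k) (u₂ j l))
  have hcoassoc := fun i => sum_sum_sum_map_coassoc₄
    ((TensorProduct.tensorTensorTensorComm k X X X X).toLinearMap ∘ₗ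
      TensorProduct.map (TensorProduct.map (p ∘ₗ TensorProduct.mk k X X (a i))
        (p ∘ₗ TensorProduct.mk k X X (b i)) ∘ₗ (TensorProduct.comm k X X).toLinearMap)
        LinearMap.id) hy hu hw hv
  simp only [LinearMap.comp_apply, TensorProduct.map_tmul, LinearEquiv.coe_coe,
    TensorProduct.comm_tmul, TensorProduct.mk_apply, LinearMap.id_apply,
    TensorProduct.tensorTensorTensorComm_tmul] at hcoassoc
  rw [Gmap_tmul_s16 _ hy, map_sum]
  simp only [comulT_tmul_s16, hp.comul_apply hx (hu _), Gmap_tmul_s16 _ (hv _ _), ← hw,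
    TensorProduct.sum_tmul, map_sum]
  simp only [TensorProduct.tmul_sum, map_sum, TensorProduct.tensorTensorTensorComm_tmul]
  exact Finset.sum_comm.trans ((Finset.sum_congr rfl fun i _ => hcoassoc i).trans Finset.sum_comm)

theorem apply_Gmap_tmul_eq_counit_smul (hg : g ∘ₗ Gmap k X p = cE k X) (z w : X) :
    g (Gmap k X p (z ⊗ₜ w)) = counit (R := k) w • z := by
  simpa [cE] using LinearMap.congr_fun hg (z ⊗ₜ w)

theorem sum_sum_tmul_apply_Gmap_eq {Y : Type*} [AddCommGroup Y] [Module k Y]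
    (hg : g ∘ₗ Gmap k X p = cE k X) (D : X →ₗ[k] Y) (z : X)
    {u w : Fin m → X} (hy : ∑ j, u j ⊗ₜ[k] w j = comul y)
    {mu : Fin m → ℕ} {u₁ u₂ : ∀ j, Fin (mu j) → X}
    (hu : ∀ j, ∑ l, u₁ j l ⊗ₜ[k] u₂ j l = comul (u j)) :
    ∑ j, ∑ l, D (u₁ j l) ⊗ₜ[k] g (p (z ⊗ₜ u₂ j l) ⊗ₜ w j) = D y ⊗ₜ z := by
  choose mw w₁ w₂ hw using fun j => TensorProduct.exists_fin_sum_tmul_eq (comul (R := k) (w j))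
  have hcoassoc := sum_sum_map_coassoc (TensorProduct.map D
    (g ∘ₗ TensorProduct.map (p ∘ₗ TensorProduct.mk k X X z) LinearMap.id)) hy hu hw
  simp only [TensorProduct.map_tmul, LinearMap.comp_apply, TensorProduct.mk_apply,
    LinearMap.id_apply] at hcoassoc
  simp only [hcoassoc, ← TensorProduct.tmul_sum, ← map_sum, ← Gmap_tmul_s16 _ (hw _),
    apply_Gmap_tmul_eq_counit_smul hg, ← TensorProduct.smul_tmul, ← map_smul,
    ← TensorProduct.sum_tmul, sum_smul_counit_of_comul hy]

theorem map_bOf_comulT_comp_Gmap (hp : IsCoalgMorCop k X p) (hex : ExchangeId k X p d)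
    (hg : g ∘ₗ Gmap k X p = cE k X) :
    (TensorProduct.map (bOf k X g d) g ∘ₗ comulT k X) ∘ₗ Gmap k X p =
      GmapCop k X d ∘ₗ (TensorProduct.comm k X X).toLinearMap := by
  refine TensorProduct.ext' fun x y => ?_
  obtain ⟨n, a, b, hx⟩ := TensorProduct.exists_fin_sum_tmul_eq (comul (R := k) x)
  obtain ⟨m, u, w, hy⟩ := TensorProduct.exists_fin_sum_tmul_eq (comul (R := k) y)
  choose mu u₁ u₂ hu using fun j => TensorProduct.exists_fin_sum_tmul_eq (comul (R := k) (u j))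
  have hb (z z' : X) : bOf k X g d (Gmap k X p (z ⊗ₜ z')) = d (z' ⊗ₜ z) := by
    simpa using LinearMap.congr_fun (bOf_comp_Gmap (d := d) hg) (z ⊗ₜ z')
  calc _ = ∑ j, ∑ i, ∑ l, d (u₂ j l ⊗ₜ a i) ⊗ₜ g (p (b i ⊗ₜ u₁ j l) ⊗ₜ w j) := by
        simp [comulT_Gmap_tmul hp hx hy hu, hb]
    _ = ∑ j, ∑ i, ∑ l, d (u₁ j l ⊗ₜ b i) ⊗ₜ g (p (a i ⊗ₜ u₂ j l) ⊗ₜ w j) := by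
        refine Finset.sum_congr rfl fun j _ => ?_
        simpa [map_sum] using congr(TensorProduct.map LinearMap.id
          (g ∘ₗ (TensorProduct.mk k X X).flip (w j)) $(hex x (u j) n (mu j) a b _ _ hx (hu j))).symm
    _ = ∑ i, ∑ j, ∑ l, d (u₁ j l ⊗ₜ b i) ⊗ₜ g (p (a i ⊗ₜ u₂ j l) ⊗ₜ w j) := Finset.sum_comm
    _ = ∑ i, d (y ⊗ₜ b i) ⊗ₜ a i := Finset.sum_congr rfl fun i _ =>
        sum_sum_tmul_apply_Gmap_eq hg (d ∘ₗ (TensorProduct.mk k X X).flip (b i)) (a i) hy hu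
    _ = _ := by simp [GmapCop_tmul_s16 _ hx]

end QCycle

theorem skewCond_iff (p d : H ⊗[k] H →ₗ[k] H) :
    SkewCond k H p d ↔
      LinearMap.mul' k H ∘ₗ GmapCop k H d ∘ₗ (TensorProduct.comm k H H).toLinearMap =
        LinearMap.mul' k H ∘ₗ Gmap k H p := by
  constructor
  · intro hs
    refine TensorProduct.ext' fun x y => ?_
    obtain ⟨n, a, b, hx⟩ := TensorProduct.exists_fin_sum_tmul_eq (comul (R := k) x)
    obtain ⟨m, c, e, hy⟩ := TensorProduct.exists_fin_sum_tmul_eq (comul (R := k) y)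
    simpa [GmapCop_tmul_s16 _ hx, Gmap_tmul_s16 _ hy] using hs x y n m a b c e hx hy
  · intro h x y n m a b c e hx hy
    simpa [GmapCop_tmul_s16 _ hx, Gmap_tmul_s16 _ hy] using LinearMap.congr_fun h (x ⊗ₜ y)

end QBrace

theorem stmt_16 (p d g : H ⊗[k] H →ₗ[k] H) (hpd : IsHopfQBrace k H p d)
    (hg2 : g ∘ₗ Gmap k H p = cE k H) :
    LinearMap.mul' k H ∘ₗ (TensorProduct.map (bOf k H g d) g ∘ₗ comulT k H) =
        LinearMap.mul' k H ↔
      SkewCond k H p d := by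
  obtain ⟨hp, -, hex, hGp, -⟩ := hpd
  rw [skewCond_iff, ← LinearMap.cancel_right hGp.2, LinearMap.comp_assoc,
    map_bOf_comulT_comp_Gmap hp hex hg2]

end
end
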